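/- arXiv:2206.01606 — 3 statements merged into one kernel-verified Lean document; each statement's English description precedes it below -/
import Mathlib

section
/- Let X be a measurable space, ν a probability measure on X × ℝ with ∫ y² dν(x, y) < ∞ and X-marginal ν_X, let Θ be a measurable space with probability measure q, and let f : Θ × X → ℝ be jointly measurable with ∫∫ f(θ, x)² dq dν_X < ∞. Suppose the regression function is well specified: for some θ* ∈ Θ, the conditional expectation of Y given X = x under ν equals f(θ*, x) for ν_X-almost every x. Then ( ∫ |y − ∫_Θ f(θ, x) dq(θ)|² dν(x, y) − ∫ |y − f(θ*, x)|² dν(x, y) ) + ∫_X ∫_Θ |f(θ, x) − ∫_Θ f(θ', x) dq(θ')|² dq(θ) dν_X(x) = ∫_Θ ∫ |y − f(θ, x)|² dν(x, y) dq(θ) − ∫ |y − f(θ*, x)|² dν(x, y), i.e., PER⁽²⁾ + BER⁽²⁾ equals the excess risk ER⁽²⁾, and this common value is at most the total risk ∫_Θ ∫ |y − f(θ, x)|² dν dq. (Theorem 2 of the paper, unconditional version.) -/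
/-!
Everything is a Pythagorean identity in `L²`: for a probability measure `μ`,
`∫ (F - c)² dμ = ∫ (F - ∫ F dμ)² dμ + (∫ F dμ - c)²`.
Applied to each conditional law of `Y` given `X = x`, whose mean is `f θ* x`, it shows that the
risk of any square-integrable predictor `h` is the risk of `θ*` plus `∫ (h - f θ*)² dν_X`.
Averaging this over `q` and applying the identity once more to `θ ↦ f θ x` under `q` splits the
excess risk into the posterior variance and `∫ (g - f θ*)² dν_X`, where `g` is the posterior
mean; the latter is the excess risk of `g`. The inequality holds because the risk of `θ*` is
nonnegative.
-/

open MeasureTheory ProbabilityTheory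

section SecondMoment

variable {α : Type*} [MeasurableSpace α] {μ : Measure α} [IsProbabilityMeasure μ] {F : α → ℝ}

theorem integral_sub_const_sq (hF : MemLp F 2 μ) (c : ℝ) :
    ∫ a, (F a - c) ^ 2 ∂μ = ∫ a, (F a - ∫ b, F b ∂μ) ^ 2 ∂μ + (∫ a, F a ∂μ - c) ^ 2 := by
  have h := variance_eq_sub (μ := μ) (X := fun a => F a - c) (hF.sub (memLp_const c))
  rw [variance_sub_const hF.aestronglyMeasurable, variance_eq_integral hF.aemeasurable,
    integral_sub (hF.integrable one_le_two) (integrable_const c)] at h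
  simp only [Pi.pow_apply, integral_const, probReal_univ, smul_eq_mul, one_mul] at h
  linarith

theorem sq_integral_le_integral_sq (hF : MemLp F 2 μ) :
    (∫ a, F a ∂μ) ^ 2 ≤ ∫ a, F a ^ 2 ∂μ := by
  have h := integral_sub_const_sq hF 0
  simp only [sub_zero] at h
  have : 0 ≤ ∫ a, (F a - ∫ b, F b ∂μ) ^ 2 ∂μ := integral_nonneg fun _ => sq_nonneg _
  linarith

end SecondMoment

theorem memLp_two_integral_of_integrable_integral_sq {α β : Type*} [MeasurableSpace α]
    [MeasurableSpace β] {ρ : Measure β} {μ : β → Measure α} [∀ b, IsProbabilityMeasure (μ b)]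
    {F : β → α → ℝ} (hmeas : AEStronglyMeasurable (fun b => ∫ a, F b a ∂μ b) ρ)
    (hF : ∀ᵐ b ∂ρ, MemLp (F b) 2 (μ b)) (hsq : Integrable (fun b => ∫ a, F b a ^ 2 ∂μ b) ρ) :
    MemLp (fun b => ∫ a, F b a ∂μ b) 2 ρ := by
  rw [memLp_two_iff_integrable_sq hmeas]
  refine hsq.mono' (hmeas.pow 2) ?_
  filter_upwards [hF] with b hb
  rw [Real.norm_eq_abs, abs_of_nonneg (sq_nonneg _)]
  exact sq_integral_le_integral_sq hb

namespace MeasureTheory.MemLp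

variable {α β : Type*} [MeasurableSpace α] [MeasurableSpace β] {μ : Measure α} {ν : Measure β}
  [SFinite μ] [SFinite ν] {F : α × β → ℝ}

theorem ae_memLp_two_prodMk_left (hF : MemLp F 2 (μ.prod ν)) :
    ∀ᵐ x ∂μ, MemLp (fun y => F (x, y)) 2 ν := by
  filter_upwards [hF.aestronglyMeasurable.prodMk_left, hF.integrable_sq.prod_right_ae]
    with x hmeas hsq
  exact (memLp_two_iff_integrable_sq hmeas).2 hsq

theorem ae_memLp_two_prodMk_right (hF : MemLp F 2 (μ.prod ν)) :
    ∀ᵐ y ∂ν, MemLp (fun x => F (x, y)) 2 μ := by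
  filter_upwards [hF.aestronglyMeasurable.prodMk_right, hF.integrable_sq.prod_left_ae]
    with y hmeas hsq
  exact (memLp_two_iff_integrable_sq hmeas).2 hsq

theorem two_integral_prod_right [IsProbabilityMeasure μ] (hF : MemLp F 2 (μ.prod ν)) :
    MemLp (fun y => ∫ x, F (x, y) ∂μ) 2 ν :=
  memLp_two_integral_of_integrable_integral_sq (μ := fun _ => μ) (F := fun y x => F (x, y))
    hF.aestronglyMeasurable.prod_swap.integral_prod_right' hF.ae_memLp_two_prodMk_right
    hF.integrable_sq.integral_prod_right

end MeasureTheory.MemLp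

theorem integral_integral_sub_sq_eq_add {Θ X : Type*} [MeasurableSpace Θ] [MeasurableSpace X]
    {q : Measure Θ} [IsProbabilityMeasure q] {ρ : Measure X} [SFinite ρ] {F : Θ → X → ℝ}
    (hF : MemLp (Function.uncurry F) 2 (q.prod ρ)) {c : X → ℝ} (hc : MemLp c 2 ρ) :
    ∫ x, ∫ θ, (F θ x - c x) ^ 2 ∂q ∂ρ
      = ∫ x, ∫ θ, (F θ x - ∫ θ', F θ' x ∂q) ^ 2 ∂q ∂ρ + ∫ x, (∫ θ, F θ x ∂q - c x) ^ 2 ∂ρ := by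
  have hmean : MemLp (fun x => ∫ θ, F θ x ∂q) 2 ρ := hF.two_integral_prod_right
  have hvar : Integrable (fun p : Θ × X => (F p.1 p.2 - ∫ θ', F θ' p.2 ∂q) ^ 2) (q.prod ρ) :=
    (hF.sub (hmean.comp_snd q)).integrable_sq
  have hbias : Integrable (fun x => (∫ θ, F θ x ∂q - c x) ^ 2) ρ := (hmean.sub hc).integrable_sq
  rw [← integral_add hvar.integral_prod_right hbias]
  refine integral_congr_ae ?_
  filter_upwards [hF.ae_memLp_two_prodMk_right] with x hx
  exact integral_sub_const_sq hx (c x)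

section Regression

variable {X : Type*} [MeasurableSpace X] {ν : Measure (X × ℝ)} [IsFiniteMeasure ν]

theorem memLp_two_integral_condKernel (hY : MemLp (fun z : X × ℝ => z.2) 2 ν) :
    MemLp (fun x => ∫ y, y ∂ν.condKernel x) 2 ν.fst := by
  have hY2 : Integrable (fun z : X × ℝ => z.2 ^ 2) ν := hY.integrable_sq
  refine memLp_two_integral_of_integrable_integral_sq (F := fun _ y => y)
    hY.aestronglyMeasurable.integral_condKernel ?_ hY2.integral_condKernel
  filter_upwards [hY2.condKernel_ae] with x hx
  exact (memLp_two_iff_integrable_sq aestronglyMeasurable_id).2 hx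

theorem integral_sub_sq_eq_add_of_condKernel (hY : MemLp (fun z : X × ℝ => z.2) 2 ν)
    {m h : X → ℝ} (hm : MemLp m 2 ν.fst) (hh : MemLp h 2 ν.fst)
    (hcond : ∀ᵐ x ∂ν.fst, ∫ y, y ∂ν.condKernel x = m x) :
    ∫ z, (z.2 - h z.1) ^ 2 ∂ν = ∫ z, (z.2 - m z.1) ^ 2 ∂ν + ∫ x, (h x - m x) ^ 2 ∂ν.fst := by
  have hrisk : ∀ {k : X → ℝ}, MemLp k 2 ν.fst → Integrable (fun z => (z.2 - k z.1) ^ 2) ν :=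
    fun hk => (hY.sub (hk.comp_of_map measurable_fst.aemeasurable)).integrable_sq
  have hbias : Integrable (fun x => (h x - m x) ^ 2) ν.fst := (hh.sub hm).integrable_sq
  rw [← Measure.integral_condKernel (hrisk hh), ← Measure.integral_condKernel (hrisk hm),
    ← integral_add (hrisk hm).integral_condKernel hbias]
  refine integral_congr_ae ?_
  filter_upwards [hcond, hY.integrable_sq.condKernel_ae] with x hmean hx
  have hsplit :=
    integral_sub_const_sq ((memLp_two_iff_integrable_sq aestronglyMeasurable_id).2 hx) (h x)
  simp only [id, hmean] at hsplit
  rw [hsplit, sub_sq_comm (m x)]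

theorem integral_integral_sub_sq_eq_add_of_condKernel {Θ : Type*} [MeasurableSpace Θ]
    {q : Measure Θ} [IsProbabilityMeasure q] (hY : MemLp (fun z : X × ℝ => z.2) 2 ν)
    {F : Θ → X → ℝ} (hF : MemLp (Function.uncurry F) 2 (q.prod ν.fst)) {m : X → ℝ}
    (hm : MemLp m 2 ν.fst) (hcond : ∀ᵐ x ∂ν.fst, ∫ y, y ∂ν.condKernel x = m x) :
    ∫ θ, ∫ z, (z.2 - F θ z.1) ^ 2 ∂ν ∂q
      = ∫ z, (z.2 - m z.1) ^ 2 ∂ν + ∫ x, ∫ θ, (F θ x - m x) ^ 2 ∂q ∂ν.fst := by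
  have hbias : Integrable (fun p : Θ × X => (F p.1 p.2 - m p.2) ^ 2) (q.prod ν.fst) :=
    (hF.sub (hm.comp_snd q)).integrable_sq
  calc ∫ θ, ∫ z, (z.2 - F θ z.1) ^ 2 ∂ν ∂q
      = ∫ θ, (∫ z, (z.2 - m z.1) ^ 2 ∂ν + ∫ x, (F θ x - m x) ^ 2 ∂ν.fst) ∂q := by
        refine integral_congr_ae ?_
        filter_upwards [hF.ae_memLp_two_prodMk_left] with θ hθ
        exact integral_sub_sq_eq_add_of_condKernel hY hm hθ hcond
    _ = ∫ z, (z.2 - m z.1) ^ 2 ∂ν + ∫ θ, ∫ x, (F θ x - m x) ^ 2 ∂ν.fst ∂q := by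
        rw [integral_add (integrable_const _) hbias.integral_prod_left, integral_const,
          probReal_univ, one_smul]
    _ = ∫ z, (z.2 - m z.1) ^ 2 ∂ν + ∫ x, ∫ θ, (F θ x - m x) ^ 2 ∂q ∂ν.fst := by
        rw [integral_integral_swap (f := fun θ x => (F θ x - m x) ^ 2) hbias]

end Regression

/-- Theorem 2 of the paper, unconditional version.  `ν` is the joint
data-generating distribution of input–output pairs `(X, Y)` with finite second
moment of `Y`; `ν.fst` is its `X`-marginal and `ν.condKernel x` the conditional
distribution of `Y` given `X = x`; `q` is the posterior over parameters and
`f θ x` the model's prediction.  If the regression function is well specified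
(`∫ y d(ν.condKernel x) = f θ* x` for `ν.fst`-a.e. `x`), then
`PER⁽²⁾ + BER⁽²⁾ = ER⁽²⁾`, and this common value is at most the total risk. -/
theorem thm2_squared_loss_unconditional
    {X Θ : Type*} [MeasurableSpace X] [MeasurableSpace Θ]
    (ν : Measure (X × ℝ)) [IsProbabilityMeasure ν]
    (hν2 : Integrable (fun z : X × ℝ => z.2 ^ 2) ν)
    (q : Measure Θ) [IsProbabilityMeasure q]
    (f : Θ → X → ℝ) (hf_meas : Measurable (Function.uncurry f))
    (hf2 : Integrable (fun p : Θ × X => (f p.1 p.2) ^ 2) (q.prod ν.fst))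
    (θs : Θ)
    (hws : ∀ᵐ x ∂ν.fst, ∫ y, y ∂(ν.condKernel x) = f θs x) :
    -- PER⁽²⁾ + BER⁽²⁾ = ER⁽²⁾
    (((∫ z : X × ℝ, |z.2 - ∫ θ, f θ z.1 ∂q| ^ 2 ∂ν)
          - ∫ z : X × ℝ, |z.2 - f θs z.1| ^ 2 ∂ν)
        + ∫ x, ∫ θ, |f θ x - ∫ θ', f θ' x ∂q| ^ 2 ∂q ∂ν.fst
      = (∫ θ, ∫ z : X × ℝ, |z.2 - f θ z.1| ^ 2 ∂ν ∂q)
          - ∫ z : X × ℝ, |z.2 - f θs z.1| ^ 2 ∂ν)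
    -- and the common value is at most the total risk
    ∧ (∫ θ, ∫ z : X × ℝ, |z.2 - f θ z.1| ^ 2 ∂ν ∂q)
          - (∫ z : X × ℝ, |z.2 - f θs z.1| ^ 2 ∂ν)
        ≤ ∫ θ, ∫ z : X × ℝ, |z.2 - f θ z.1| ^ 2 ∂ν ∂q := by
  simp only [sq_abs]
  have hY : MemLp (fun z : X × ℝ => z.2) 2 ν :=
    (memLp_two_iff_integrable_sq measurable_snd.aestronglyMeasurable).2 hν2
  have hf : MemLp (Function.uncurry f) 2 (q.prod ν.fst) :=
    (memLp_two_iff_integrable_sq hf_meas.aestronglyMeasurable).2 hf2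
  have hm : MemLp (f θs) 2 ν.fst := (memLp_two_integral_condKernel hY).ae_eq hws
  have hmean : MemLp (fun x => ∫ θ, f θ x ∂q) 2 ν.fst := hf.two_integral_prod_right
  rw [integral_integral_sub_sq_eq_add_of_condKernel hY hf hm hws,
    integral_sub_sq_eq_add_of_condKernel hY hm hmean hws,
    integral_integral_sub_sq_eq_add hf hm]
  have hrisk_nonneg : 0 ≤ ∫ z, (z.2 - f θs z.1) ^ 2 ∂ν := integral_nonneg fun _ => sq_nonneg _
  exact ⟨by ring, by linarith⟩
end

section
/- Let Θ be a measurable space, q a probability measure on Θ, m : Θ → ℝ measurable and square-integrable with respect to q, and v > 0. For each θ let p_θ denote the density of the Gaussian distribution N(m(θ), v²) with respect to Lebesgue measure on ℝ, and set p^q(y) := ∫_Θ p_θ(y) dq(θ). Then the Bayesian excess risk for the log loss satisfies ∫_Θ KL(p_θ‖p^q) dq(θ) ≤ Var_q(m) / v², where Var_q(m) := ∫_Θ |m(θ) − ∫_Θ m dq|² dq(θ). That is, for the Gaussian likelihood the mutual information BER^log is bounded by the posterior predictive variance divided by the noise variance. -/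
open MeasureTheory Real

/-- The density of the Gaussian distribution `N(a, v²)` with respect to
Lebesgue measure on `ℝ`. -/
noncomputable def gaussPdf (a v y : ℝ) : ℝ :=
  (Real.sqrt (2 * Real.pi * v ^ 2))⁻¹ * Real.exp (-(y - a) ^ 2 / (2 * v ^ 2))

section GaussFacts
variable {v : ℝ}

lemma vnn_ne (hv : 0 < v) : (⟨v ^ 2, sq_nonneg v⟩ : NNReal) ≠ 0 := by
  apply NNReal.coe_ne_zero.mp
  show (v ^ 2 : ℝ) ≠ 0
  positivity

lemma gaussPdf_eq (a : ℝ) : gaussPdf a v = ProbabilityTheory.gaussianPDFReal a ⟨v ^ 2, sq_nonneg v⟩ := by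
  ext y
  simp [gaussPdf, ProbabilityTheory.gaussianPDFReal]
  rfl

lemma gaussPdf_pos (hv : 0 < v) (a y : ℝ) : 0 < gaussPdf a v y := by
  rw [gaussPdf_eq]
  exact ProbabilityTheory.gaussianPDFReal_pos _ _ _ (vnn_ne hv)

lemma measurable_gaussPdf (a : ℝ) : Measurable (gaussPdf a v) := by
  rw [gaussPdf_eq]; exact ProbabilityTheory.measurable_gaussianPDFReal _ _

lemma integrable_gaussPdf (a : ℝ) : Integrable (gaussPdf a v) := by
  rw [gaussPdf_eq]; exact ProbabilityTheory.integrable_gaussianPDFReal _ _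

lemma integral_gaussPdf (hv : 0 < v) (a : ℝ) : ∫ y, gaussPdf a v y = 1 := by
  rw [gaussPdf_eq]
  exact ProbabilityTheory.integral_gaussianPDFReal_eq_one a (vnn_ne hv)

lemma gaussPdf_le (hv : 0 < v) (a y : ℝ) : gaussPdf a v y ≤ (Real.sqrt (2 * Real.pi * v ^ 2))⁻¹ := by
  have hs : 0 < Real.sqrt (2 * Real.pi * v ^ 2) := by
    apply Real.sqrt_pos.2
    have := Real.pi_pos
    positivity
  calc gaussPdf a v y ≤ (Real.sqrt (2 * Real.pi * v ^ 2))⁻¹ * 1 := by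
        apply mul_le_mul_of_nonneg_left _ (by positivity)
        rw [Real.exp_le_one_iff]
        exact div_nonpos_of_nonpos_of_nonneg (neg_nonpos.mpr (sq_nonneg _)) (by positivity)
    _ = _ := mul_one _

lemma log_gaussPdf (hv : 0 < v) (a y : ℝ) :
    Real.log (gaussPdf a v y) =
      Real.log (Real.sqrt (2 * Real.pi * v ^ 2))⁻¹ - (y - a) ^ 2 / (2 * v ^ 2) := by
  have hs : 0 < Real.sqrt (2 * Real.pi * v ^ 2) := by
    apply Real.sqrt_pos.2
    have := Real.pi_pos
    positivity
  rw [gaussPdf, Real.log_mul (by positivity) (Real.exp_pos _).ne', Real.log_exp]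
  ring

end GaussFacts

section Moments
variable {v : ℝ}

lemma gaussPdf0_eq (v t : ℝ) :
    gaussPdf 0 v t = (Real.sqrt (2 * Real.pi * v ^ 2))⁻¹ * Real.exp (-(2 * v ^ 2)⁻¹ * t ^ 2) := by
  simp only [gaussPdf, sub_zero]
  congr 1
  ring_nf

lemma integrable_id_mul_gaussPdf (hv : 0 < v) (a : ℝ) :
    Integrable (fun y => (y - a) * gaussPdf a v y) := by
  have hb : 0 < (2 * v ^ 2)⁻¹ := by positivity
  have h0 : Integrable (fun t : ℝ => t * gaussPdf 0 v t) := by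
    have := (integrable_mul_exp_neg_mul_sq hb).const_mul (Real.sqrt (2 * Real.pi * v ^ 2))⁻¹
    refine this.congr (Filter.Eventually.of_forall fun t => ?_)
    simp only [gaussPdf0_eq]
    ring
  have := h0.comp_sub_right a
  refine this.congr (Filter.Eventually.of_forall fun y => ?_)
  have h : gaussPdf 0 v (y - a) = gaussPdf a v y := by
    simp [gaussPdf]
  simp only [h]

lemma integral_id_mul_gaussPdf_shifted (hv : 0 < v) (a : ℝ) :
    ∫ y, (y - a) * gaussPdf a v y = 0 := by
  have key : ∫ t, t * gaussPdf 0 v t = 0 := by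
    have hodd : ∀ t : ℝ, (fun t => t * gaussPdf 0 v t) (-t) = -((fun t => t * gaussPdf 0 v t) t) := by
      intro t; simp [gaussPdf]
    have h1 : ∫ t : ℝ, (-t) * gaussPdf 0 v (-t) = ∫ t, t * gaussPdf 0 v t :=
      integral_neg_eq_self (fun t => t * gaussPdf 0 v t) volume
    simp only [hodd] at h1
    rw [integral_neg] at h1
    linarith
  have hshift : ∫ y : ℝ, (y - a) * gaussPdf 0 v (y - a) = ∫ t, t * gaussPdf 0 v t :=
    integral_sub_right_eq_self (fun t => t * gaussPdf 0 v t) a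
  calc ∫ y, (y - a) * gaussPdf a v y = ∫ y : ℝ, (y - a) * gaussPdf 0 v (y - a) := by
        congr 1; ext y
        congr 1
        simp [gaussPdf]
    _ = ∫ t, t * gaussPdf 0 v t := hshift
    _ = 0 := key

lemma integrable_sq_mul_gaussPdf (hv : 0 < v) (a : ℝ) :
    Integrable (fun y => (y - a) ^ 2 * gaussPdf a v y) := by
  have hb : 0 < (2 * v ^ 2)⁻¹ := by positivity
  have hb2 : 0 < (2 * v ^ 2)⁻¹ / 2 := by positivity
  set b := (2 * v ^ 2)⁻¹ with hbdef
  have h0 : Integrable (fun t : ℝ => t ^ 2 * gaussPdf 0 v t) := by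
    have hint := (integrable_exp_neg_mul_sq hb2).const_mul
      ((Real.sqrt (2 * Real.pi * v ^ 2))⁻¹ * (2 / b))
    refine Integrable.mono' hint ?_ (Filter.Eventually.of_forall fun t => ?_)
    · exact ((measurable_id.pow_const 2).mul (measurable_gaussPdf 0)).aestronglyMeasurable
    · have hg : 0 ≤ t ^ 2 * gaussPdf 0 v t := by
        have := (gaussPdf_pos hv 0 t).le; positivity
      rw [Real.norm_of_nonneg hg]
      have ht : t ^ 2 ≤ (2 / b) * Real.exp (b / 2 * t ^ 2) := by
        have h1 : b / 2 * t ^ 2 ≤ Real.exp (b / 2 * t ^ 2) :=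
          (Real.add_one_le_exp _).trans' (by linarith [Real.add_one_le_exp (b / 2 * t ^ 2)])
        calc t ^ 2 = (2 / b) * (b / 2 * t ^ 2) := by field_simp
          _ ≤ (2 / b) * Real.exp (b / 2 * t ^ 2) := by
              apply mul_le_mul_of_nonneg_left h1 (by positivity)
      have hgauss : gaussPdf 0 v t = (Real.sqrt (2 * Real.pi * v ^ 2))⁻¹ * Real.exp (-b * t ^ 2) :=
        gaussPdf0_eq v t
      rw [hgauss]
      have hs : (0:ℝ) < (Real.sqrt (2 * Real.pi * v ^ 2))⁻¹ := by
        have := Real.pi_pos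
        have : (0:ℝ) < Real.sqrt (2 * Real.pi * v ^ 2) := Real.sqrt_pos.2 (by positivity)
        positivity
      calc t ^ 2 * ((Real.sqrt (2 * Real.pi * v ^ 2))⁻¹ * Real.exp (-b * t ^ 2))
          ≤ (2 / b) * Real.exp (b / 2 * t ^ 2) * ((Real.sqrt (2 * Real.pi * v ^ 2))⁻¹ * Real.exp (-b * t ^ 2)) := by
            apply mul_le_mul_of_nonneg_right ht (by positivity)
        _ = (Real.sqrt (2 * Real.pi * v ^ 2))⁻¹ * (2 / b) * (Real.exp (b / 2 * t ^ 2) * Real.exp (-b * t ^ 2)) := by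
            ring
        _ = (Real.sqrt (2 * Real.pi * v ^ 2))⁻¹ * (2 / b) * Real.exp (-(b / 2) * t ^ 2) := by
            rw [← Real.exp_add]; congr 1; ring
  have := h0.comp_sub_right a
  refine this.congr (Filter.Eventually.of_forall fun y => ?_)
  have h : gaussPdf 0 v (y - a) = gaussPdf a v y := by simp [gaussPdf]
  simp only [h]

end Moments

section Derived
variable {v : ℝ}

lemma measurable_gaussPdf_fst (v y : ℝ) : Measurable (fun a => gaussPdf a v y) := by
  unfold gaussPdf
  exact measurable_const.mul ((((measurable_const.sub measurable_id).pow_const 2).neg.div_const _).exp)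

lemma integrable_mul_gaussPdf (hv : 0 < v) (a : ℝ) :
    Integrable (fun y => y * gaussPdf a v y) := by
  have h := (integrable_id_mul_gaussPdf hv a).add ((integrable_gaussPdf (v := v) a).const_mul a)
  refine h.congr (Filter.Eventually.of_forall fun y => ?_)
  simp only [Pi.add_apply]
  ring

lemma integral_mul_gaussPdf (hv : 0 < v) (a : ℝ) : ∫ y, y * gaussPdf a v y = a := by
  have h : (fun y => y * gaussPdf a v y)
      = fun y => (y - a) * gaussPdf a v y + a * gaussPdf a v y := by
    ext y; ring
  rw [h, integral_add (integrable_id_mul_gaussPdf hv a)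
    ((integrable_gaussPdf (v := v) a).const_mul a),
    integral_id_mul_gaussPdf_shifted hv a, integral_const_mul, integral_gaussPdf hv]
  ring

lemma integrable_sq_self_mul_gaussPdf (hv : 0 < v) (a : ℝ) :
    Integrable (fun y => y ^ 2 * gaussPdf a v y) := by
  have h := ((integrable_sq_mul_gaussPdf hv a).add
    ((integrable_mul_gaussPdf hv a).const_mul (2 * a))).sub
    ((integrable_gaussPdf (v := v) a).const_mul (a ^ 2))
  refine h.congr (Filter.Eventually.of_forall fun y => ?_)
  simp only [Pi.add_apply, Pi.sub_apply]
  ring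

lemma integrable_abs_mul_gaussPdf (hv : 0 < v) (a : ℝ) :
    Integrable (fun y => |y| * gaussPdf a v y) := by
  have h := (integrable_mul_gaussPdf hv a).abs
  refine h.congr (Filter.Eventually.of_forall fun y => ?_)
  show |y * gaussPdf a v y| = |y| * gaussPdf a v y
  rw [abs_mul, abs_of_nonneg (gaussPdf_pos hv a y).le]

end Derived


lemma integral_linear_prob {α : Type*} [MeasurableSpace α] (μq : Measure α)
    [IsProbabilityMeasure μq] {f g : α → ℝ} (hf : Integrable f μq) (hg : Integrable g μq)
    (c0 c1 c2 : ℝ) :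
    ∫ x, (c0 + c1 * f x + c2 * g x) ∂μq = c0 + c1 * ∫ x, f x ∂μq + c2 * ∫ x, g x ∂μq := by
  have h1 : Integrable (fun x => c1 * f x) μq := hf.const_mul c1
  have h2 : Integrable (fun x => c2 * g x) μq := hg.const_mul c2
  have h01 : Integrable (fun x => c0 + c1 * f x) μq := (integrable_const c0).add h1
  rw [integral_add h01 h2, integral_add (integrable_const c0) h1,
    integral_const_mul, integral_const_mul, integral_const]
  simp

lemma integral_linear_two {α : Type*} [MeasurableSpace α] (μq : Measure α)
    {f g : α → ℝ} (hf : Integrable f μq) (hg : Integrable g μq) (c1 c2 : ℝ) :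
    ∫ x, (c1 * f x + c2 * g x) ∂μq = c1 * ∫ x, f x ∂μq + c2 * ∫ x, g x ∂μq := by
  have h1 : Integrable (fun x => c1 * f x) μq := hf.const_mul c1
  have h2 : Integrable (fun x => c2 * g x) μq := hg.const_mul c2
  rw [integral_add h1 h2, integral_const_mul, integral_const_mul]


/-- For the Gaussian likelihood `p_θ = N(m θ, v²)` with posterior predictive
density `p^q y = ∫ p_θ y dq`, the Bayesian excess risk for the log loss (the
mutual information `∫ KL(p_θ‖p^q) dq` between `θ ∼ q` and `Y ∼ p_θ`) is
bounded by the posterior predictive variance divided by the noise variance: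
`∫ KL(p_θ‖p^q) dq ≤ Var_q(m) / v²`.  Here the inner integrals are with
respect to Lebesgue measure (`volume`) on `ℝ`. -/
theorem BER_log_le_variance_gaussian
    {Θ : Type*} [MeasurableSpace Θ] (q : Measure Θ) [IsProbabilityMeasure q]
    (m : Θ → ℝ) (hm_meas : Measurable m) (hm : MemLp m 2 q)
    (v : ℝ) (hv : 0 < v) :
    ∫ θ, (∫ y : ℝ, gaussPdf (m θ) v y *
        Real.log (gaussPdf (m θ) v y / ∫ θ', gaussPdf (m θ') v y ∂q)) ∂q
      ≤ (∫ θ, |m θ - ∫ θ', m θ' ∂q| ^ 2 ∂q) / v ^ 2 := by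
  have hv2 : (0:ℝ) < 2 * v ^ 2 := by positivity
  set C : ℝ := (Real.sqrt (2 * Real.pi * v ^ 2))⁻¹ with hCdef
  have hm1 : Integrable m q := hm.integrable one_le_two
  have hm2 : Integrable (fun θ => m θ ^ 2) q := hm.integrable_sq
  set μ' : ℝ := ∫ θ, m θ ∂q with hμ'def
  set M2 : ℝ := ∫ θ, m θ ^ 2 ∂q with hM2def
  set P : ℝ → ℝ := fun y => ∫ θ', gaussPdf (m θ') v y ∂q with hPdef
  set L : ℝ → ℝ := fun y => Real.log C - (y ^ 2 - 2 * y * μ' + M2) / (2 * v ^ 2) with hLdef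
  -- measurability
  have hprod_meas : Measurable (fun p : Θ × ℝ => gaussPdf (m p.1) v p.2) := by
    unfold gaussPdf
    exact measurable_const.mul
      ((((measurable_snd.sub (hm_meas.comp measurable_fst)).pow_const 2).neg.div_const _).exp)
  have hPsm : StronglyMeasurable P :=
    hprod_meas.stronglyMeasurable.integral_prod_left'
  have hlogP_meas : Measurable fun y => Real.log (P y) :=
    Real.measurable_log.comp hPsm.measurable
  -- integrability in θ'
  have hgint : ∀ y : ℝ, Integrable (fun θ' => gaussPdf (m θ') v y) q := by
    intro y
    refine (integrable_const C).mono'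
      (((measurable_gaussPdf_fst v y).comp hm_meas).aestronglyMeasurable)
      (Filter.Eventually.of_forall fun θ' => ?_)
    rw [Real.norm_of_nonneg (gaussPdf_pos hv _ _).le]
    exact gaussPdf_le hv _ _
  have hPpos : ∀ y, 0 < P y := by
    intro y
    refine (integral_pos_iff_support_of_nonneg
      (fun θ' => (gaussPdf_pos hv _ _).le) (hgint y)).2 ?_
    have hs : (Function.support fun θ' => gaussPdf (m θ') v y) = Set.univ := by
      ext θ'; simp [Function.mem_support, (gaussPdf_pos hv (m θ') y).ne']
    rw [hs]
    simp
  have hPle : ∀ y, P y ≤ C := by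
    intro y
    calc P y ≤ ∫ _, C ∂q :=
          integral_mono (hgint y) (integrable_const C) (fun θ' => gaussPdf_le hv _ _)
      _ = C := by simp
  -- integrability of θ' ↦ log gaussPdf
  have hlogg_int : ∀ y : ℝ, Integrable (fun θ' => Real.log (gaussPdf (m θ') v y)) q := by
    intro y
    have hfun : (fun θ' => Real.log (gaussPdf (m θ') v y))
        = fun θ' => (Real.log C - y ^ 2 * (2 * v ^ 2)⁻¹)
            + (2 * y * (2 * v ^ 2)⁻¹) * m θ' + (-(2 * v ^ 2)⁻¹) * m θ' ^ 2 := by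
      funext θ'
      rw [log_gaussPdf hv, ← hCdef]
      ring
    rw [hfun]
    have h1 : Integrable (fun θ' => (2 * y * (2 * v ^ 2)⁻¹) * m θ') q := hm1.const_mul _
    have h2 : Integrable (fun θ' => (-(2 * v ^ 2)⁻¹) * m θ' ^ 2) q := hm2.const_mul _
    have h01 : Integrable (fun θ' => (Real.log C - y ^ 2 * (2 * v ^ 2)⁻¹)
        + (2 * y * (2 * v ^ 2)⁻¹) * m θ') q := (integrable_const _).add h1
    exact h01.add h2
  have hL_eq : ∀ y : ℝ, ∫ θ', Real.log (gaussPdf (m θ') v y) ∂q = L y := by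
    intro y
    have h1 : ∫ θ', Real.log (gaussPdf (m θ') v y) ∂q
        = ∫ θ', ((Real.log C - y ^ 2 * (2 * v ^ 2)⁻¹)
            + (2 * y * (2 * v ^ 2)⁻¹) * m θ' + (-(2 * v ^ 2)⁻¹) * m θ' ^ 2) ∂q := by
      refine integral_congr_ae (Filter.Eventually.of_forall fun θ' => ?_)
      show Real.log (gaussPdf (m θ') v y) = (Real.log C - y ^ 2 * (2 * v ^ 2)⁻¹)
          + (2 * y * (2 * v ^ 2)⁻¹) * m θ' + (-(2 * v ^ 2)⁻¹) * m θ' ^ 2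
      rw [log_gaussPdf hv, ← hCdef]
      ring
    rw [h1, integral_linear_prob q hm1 hm2, ← hμ'def, ← hM2def, hLdef]
    ring
  -- Jensen's inequality
  have hJensen : ∀ y : ℝ, L y ≤ Real.log (P y) := by
    intro y
    rw [← hL_eq y]
    have hstep : ∀ θ', Real.log (gaussPdf (m θ') v y)
        ≤ (Real.log (P y) - 1) + (P y)⁻¹ * gaussPdf (m θ') v y + 0 * m θ' ^ 2 := by
      intro θ'
      have h1 : Real.log (gaussPdf (m θ') v y / P y)
          ≤ gaussPdf (m θ') v y / P y - 1 :=
        Real.log_le_sub_one_of_pos (div_pos (gaussPdf_pos hv _ _) (hPpos y))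
      have h2 : Real.log (gaussPdf (m θ') v y / P y)
          = Real.log (gaussPdf (m θ') v y) - Real.log (P y) :=
        Real.log_div (gaussPdf_pos hv _ _).ne' (hPpos y).ne'
      have h3 : gaussPdf (m θ') v y / P y = (P y)⁻¹ * gaussPdf (m θ') v y := by
        rw [div_eq_mul_inv]; ring
      rw [h2, h3] at h1
      linarith
    have hint2 : Integrable (fun θ' => (Real.log (P y) - 1)
        + (P y)⁻¹ * gaussPdf (m θ') v y + 0 * m θ' ^ 2) q := by
      have h1 : Integrable (fun θ' => (P y)⁻¹ * gaussPdf (m θ') v y) q :=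
        (hgint y).const_mul _
      have h2 : Integrable (fun θ' => (0:ℝ) * m θ' ^ 2) q := hm2.const_mul _
      have h01 : Integrable (fun θ' => (Real.log (P y) - 1)
          + (P y)⁻¹ * gaussPdf (m θ') v y) q := (integrable_const _).add h1
      exact h01.add h2
    calc ∫ θ', Real.log (gaussPdf (m θ') v y) ∂q
        ≤ ∫ θ', ((Real.log (P y) - 1) + (P y)⁻¹ * gaussPdf (m θ') v y + 0 * m θ' ^ 2) ∂q :=
          integral_mono (hlogg_int y) hint2 hstep
      _ = (Real.log (P y) - 1) + (P y)⁻¹ * P y + 0 * M2 := by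
          rw [integral_linear_prob q (hgint y) hm2, ← hM2def]
      _ = Real.log (P y) := by
          rw [inv_mul_cancel₀ (hPpos y).ne']
          ring
  -- ∫ P = 1
  have hPl : ∫⁻ y, ENNReal.ofReal (P y) = 1 := by
    have h1 : ∀ y, ENNReal.ofReal (P y)
        = ∫⁻ θ', ENNReal.ofReal (gaussPdf (m θ') v y) ∂q := fun y =>
      ofReal_integral_eq_lintegral_ofReal (hgint y)
        (Filter.Eventually.of_forall fun θ' => (gaussPdf_pos hv _ _).le)
    have hswap : AEMeasurable
        (Function.uncurry fun (y : ℝ) (θ' : Θ) => ENNReal.ofReal (gaussPdf (m θ') v y))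
        (volume.prod q) := by
      exact ((hprod_meas.comp measurable_swap).ennreal_ofReal).aemeasurable
    calc ∫⁻ y, ENNReal.ofReal (P y)
        = ∫⁻ y, ∫⁻ θ', ENNReal.ofReal (gaussPdf (m θ') v y) ∂q := lintegral_congr h1
      _ = ∫⁻ θ', (∫⁻ y, ENNReal.ofReal (gaussPdf (m θ') v y)) ∂q := lintegral_lintegral_swap hswap
      _ = ∫⁻ θ', (1:ENNReal) ∂q := by
          refine lintegral_congr fun θ' => ?_
          rw [← ofReal_integral_eq_lintegral_ofReal (integrable_gaussPdf _)
            (Filter.Eventually.of_forall fun y => (gaussPdf_pos hv _ _).le),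
            integral_gaussPdf hv, ENNReal.ofReal_one]
      _ = 1 := by simp
  have hPInt : Integrable P volume := by
    refine ⟨hPsm.aestronglyMeasurable, ?_⟩
    rw [hasFiniteIntegral_iff_ofReal (Filter.Eventually.of_forall fun y => (hPpos y).le), hPl]
    exact ENNReal.one_lt_top
  have hPone : ∫ y, P y = 1 := by
    rw [integral_eq_lintegral_of_nonneg_ae (Filter.Eventually.of_forall fun y => (hPpos y).le)
      hPsm.aestronglyMeasurable, hPl]
    simp
  -- per-θ integrability of the KL integrand
  have hglogg_int : ∀ θ, Integrable
      (fun y => gaussPdf (m θ) v y * Real.log (gaussPdf (m θ) v y)) := by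
    intro θ
    have hfun : (fun y => gaussPdf (m θ) v y * Real.log (gaussPdf (m θ) v y))
        = fun y => Real.log C * gaussPdf (m θ) v y
            + (-(2 * v ^ 2)⁻¹) * ((y - m θ) ^ 2 * gaussPdf (m θ) v y) := by
      funext y
      rw [log_gaussPdf hv, ← hCdef]
      ring
    rw [hfun]
    have h1 : Integrable (fun y => Real.log C * gaussPdf (m θ) v y) :=
      (integrable_gaussPdf _).const_mul _
    have h2 : Integrable (fun y => (-(2 * v ^ 2)⁻¹) * ((y - m θ) ^ 2 * gaussPdf (m θ) v y)) :=
      (integrable_sq_mul_gaussPdf hv _).const_mul _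
    exact h1.add h2
  have hlogP_bound : ∀ y, |Real.log (P y)|
      ≤ 2 * |Real.log C| + (y ^ 2 + 2 * |μ'| * |y| + |M2|) * (2 * v ^ 2)⁻¹ := by
    intro y
    have h1 : Real.log (P y) ≤ Real.log C := Real.log_le_log (hPpos y) (hPle y)
    have h2 := hJensen y
    have hq : |y ^ 2 - 2 * y * μ' + M2| ≤ y ^ 2 + 2 * |μ'| * |y| + |M2| := by
      calc |y ^ 2 - 2 * y * μ' + M2| ≤ |y ^ 2 - 2 * y * μ'| + |M2| := abs_add_le _ _
        _ ≤ |y ^ 2| + |2 * y * μ'| + |M2| := by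
            have := abs_sub (y ^ 2) (2 * y * μ')
            linarith
        _ = y ^ 2 + 2 * |μ'| * |y| + |M2| := by
            rw [abs_of_nonneg (sq_nonneg y), abs_mul, abs_mul]
            rw [abs_of_nonneg (by norm_num : (0:ℝ) ≤ 2)]
            ring
    have hLb : |L y| ≤ |Real.log C| + (y ^ 2 + 2 * |μ'| * |y| + |M2|) * (2 * v ^ 2)⁻¹ := by
      rw [hLdef]
      calc |Real.log C - (y ^ 2 - 2 * y * μ' + M2) / (2 * v ^ 2)|
          ≤ |Real.log C| + |(y ^ 2 - 2 * y * μ' + M2) / (2 * v ^ 2)| := abs_sub _ _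
        _ ≤ |Real.log C| + (y ^ 2 + 2 * |μ'| * |y| + |M2|) * (2 * v ^ 2)⁻¹ := by
            rw [abs_div, abs_of_pos hv2, div_eq_mul_inv]
            have := mul_le_mul_of_nonneg_right hq (by positivity : (0:ℝ) ≤ (2 * v ^ 2)⁻¹)
            linarith
    have hLlow : L y ≤ Real.log (P y) := h2
    rw [abs_le]
    constructor
    · have : -|L y| ≤ L y := neg_abs_le _
      have h3 : -(|Real.log C| + (y ^ 2 + 2 * |μ'| * |y| + |M2|) * (2 * v ^ 2)⁻¹)
          ≤ Real.log (P y) := by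
        have := hLb
        linarith [neg_abs_le (L y)]
      have h4 : (0:ℝ) ≤ |Real.log C| := abs_nonneg _
      linarith
    · have h4 : Real.log C ≤ |Real.log C| := le_abs_self _
      have h5 : (0:ℝ) ≤ |Real.log C| := abs_nonneg _
      have h6 : (0:ℝ) ≤ (y ^ 2 + 2 * |μ'| * |y| + |M2|) * (2 * v ^ 2)⁻¹ := by positivity
      linarith
  have hB_int : ∀ θ, Integrable (fun y => gaussPdf (m θ) v y *
      (2 * |Real.log C| + (y ^ 2 + 2 * |μ'| * |y| + |M2|) * (2 * v ^ 2)⁻¹)) := by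
    intro θ
    have h1 : Integrable (fun y => (2 * |Real.log C| + |M2| * (2 * v ^ 2)⁻¹)
        * gaussPdf (m θ) v y) := (integrable_gaussPdf _).const_mul _
    have h2 : Integrable (fun y => (2 * v ^ 2)⁻¹ * (y ^ 2 * gaussPdf (m θ) v y)) :=
      (integrable_sq_self_mul_gaussPdf hv _).const_mul _
    have h3 : Integrable (fun y => (2 * |μ'| * (2 * v ^ 2)⁻¹) * (|y| * gaussPdf (m θ) v y)) :=
      (integrable_abs_mul_gaussPdf hv _).const_mul _
    have hsum : Integrable (fun y => (2 * |Real.log C| + |M2| * (2 * v ^ 2)⁻¹)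
        * gaussPdf (m θ) v y + ((2 * v ^ 2)⁻¹ * (y ^ 2 * gaussPdf (m θ) v y)
          + (2 * |μ'| * (2 * v ^ 2)⁻¹) * (|y| * gaussPdf (m θ) v y))) := h1.add (h2.add h3)
    refine hsum.congr (Filter.Eventually.of_forall fun y => ?_)
    show _ = gaussPdf (m θ) v y *
      (2 * |Real.log C| + (y ^ 2 + 2 * |μ'| * |y| + |M2|) * (2 * v ^ 2)⁻¹)
    ring
  have hglogP_int : ∀ θ, Integrable (fun y => gaussPdf (m θ) v y * Real.log (P y)) := by
    intro θ
    refine (hB_int θ).mono' (((measurable_gaussPdf (m θ)).mul hlogP_meas).aestronglyMeasurable)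
      (Filter.Eventually.of_forall fun y => ?_)
    have hg := (gaussPdf_pos hv (m θ) y).le
    rw [Real.norm_eq_abs, abs_mul, abs_of_nonneg hg]
    exact mul_le_mul_of_nonneg_left (hlogP_bound y) hg
  have hf_int : ∀ θ, Integrable
      (fun y => gaussPdf (m θ) v y * Real.log (gaussPdf (m θ) v y / P y)) := by
    intro θ
    have hfun : (fun y => gaussPdf (m θ) v y * Real.log (gaussPdf (m θ) v y / P y))
        = fun y => gaussPdf (m θ) v y * Real.log (gaussPdf (m θ) v y)
            - gaussPdf (m θ) v y * Real.log (P y) := by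
      funext y
      rw [Real.log_div (gaussPdf_pos hv _ _).ne' (hPpos y).ne']
      ring
    rw [hfun]
    exact (hglogg_int θ).sub (hglogP_int θ)
  -- KL nonnegativity
  have hKL_nonneg : ∀ θ, 0 ≤ ∫ y, gaussPdf (m θ) v y *
      Real.log (gaussPdf (m θ) v y / P y) := by
    intro θ
    have hlow : ∀ y, gaussPdf (m θ) v y - P y
        ≤ gaussPdf (m θ) v y * Real.log (gaussPdf (m θ) v y / P y) := by
      intro y
      have hg := gaussPdf_pos hv (m θ) y
      have h1 := Real.log_le_sub_one_of_pos (div_pos (hPpos y) hg)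
      have h2 : Real.log (P y / gaussPdf (m θ) v y)
          = -Real.log (gaussPdf (m θ) v y / P y) := by
        rw [← Real.log_inv, inv_div]
      have h3 : 1 - P y / gaussPdf (m θ) v y
          ≤ Real.log (gaussPdf (m θ) v y / P y) := by
        rw [h2] at h1; linarith
      have h4 := mul_le_mul_of_nonneg_left h3 hg.le
      calc gaussPdf (m θ) v y - P y
          = gaussPdf (m θ) v y * (1 - P y / gaussPdf (m θ) v y) := by
            field_simp
        _ ≤ _ := h4
    have hsub : Integrable (fun y => gaussPdf (m θ) v y - P y) :=
      (integrable_gaussPdf _).sub hPInt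
    have h := integral_mono hsub (hf_int θ) hlow
    rwa [integral_sub (integrable_gaussPdf _) hPInt, integral_gaussPdf hv, hPone,
      sub_self] at h
  -- KL upper bound
  have hKL_le : ∀ θ, (∫ y, gaussPdf (m θ) v y * Real.log (gaussPdf (m θ) v y / P y))
      ≤ (m θ ^ 2 - 2 * μ' * m θ + M2) * (2 * v ^ 2)⁻¹ := by
    intro θ
    have hup : ∀ y, gaussPdf (m θ) v y * Real.log (gaussPdf (m θ) v y / P y)
        ≤ (2 * (m θ - μ') * (2 * v ^ 2)⁻¹) * (y * gaussPdf (m θ) v y)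
          + ((M2 - m θ ^ 2) * (2 * v ^ 2)⁻¹) * gaussPdf (m θ) v y := by
      intro y
      have hg := gaussPdf_pos hv (m θ) y
      have h1 : Real.log (gaussPdf (m θ) v y / P y)
          = Real.log (gaussPdf (m θ) v y) - Real.log (P y) :=
        Real.log_div hg.ne' (hPpos y).ne'
      have h2 : Real.log (gaussPdf (m θ) v y) - Real.log (P y)
          ≤ Real.log (gaussPdf (m θ) v y) - L y := by
        linarith [hJensen y]
      have h3 : gaussPdf (m θ) v y * (Real.log (gaussPdf (m θ) v y) - L y)
          = (2 * (m θ - μ') * (2 * v ^ 2)⁻¹) * (y * gaussPdf (m θ) v y)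
            + ((M2 - m θ ^ 2) * (2 * v ^ 2)⁻¹) * gaussPdf (m θ) v y := by
        rw [log_gaussPdf hv, ← hCdef, hLdef]
        ring
      calc gaussPdf (m θ) v y * Real.log (gaussPdf (m θ) v y / P y)
          = gaussPdf (m θ) v y * (Real.log (gaussPdf (m θ) v y) - Real.log (P y)) := by
            rw [h1]
        _ ≤ gaussPdf (m θ) v y * (Real.log (gaussPdf (m θ) v y) - L y) :=
            mul_le_mul_of_nonneg_left h2 hg.le
        _ = _ := h3
    have hr_int : Integrable (fun y =>
        (2 * (m θ - μ') * (2 * v ^ 2)⁻¹) * (y * gaussPdf (m θ) v y)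
          + ((M2 - m θ ^ 2) * (2 * v ^ 2)⁻¹) * gaussPdf (m θ) v y) := by
      have hA : Integrable (fun y =>
          (2 * (m θ - μ') * (2 * v ^ 2)⁻¹) * (y * gaussPdf (m θ) v y)) :=
        (integrable_mul_gaussPdf hv _).const_mul _
      have hB : Integrable (fun y =>
          ((M2 - m θ ^ 2) * (2 * v ^ 2)⁻¹) * gaussPdf (m θ) v y) :=
        (integrable_gaussPdf _).const_mul _
      exact hA.add hB
    calc (∫ y, gaussPdf (m θ) v y * Real.log (gaussPdf (m θ) v y / P y))
        ≤ ∫ y, ((2 * (m θ - μ') * (2 * v ^ 2)⁻¹) * (y * gaussPdf (m θ) v y)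
            + ((M2 - m θ ^ 2) * (2 * v ^ 2)⁻¹) * gaussPdf (m θ) v y) :=
          integral_mono (hf_int θ) hr_int hup
      _ = (2 * (m θ - μ') * (2 * v ^ 2)⁻¹) * (∫ y, y * gaussPdf (m θ) v y)
            + ((M2 - m θ ^ 2) * (2 * v ^ 2)⁻¹) * ∫ y, gaussPdf (m θ) v y :=
          integral_linear_two volume (integrable_mul_gaussPdf hv _) (integrable_gaussPdf _) _ _
      _ = (m θ ^ 2 - 2 * μ' * m θ + M2) * (2 * v ^ 2)⁻¹ := by
          rw [integral_mul_gaussPdf hv, integral_gaussPdf hv]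
          ring
  -- outer bound
  have hR_int : Integrable (fun θ => (m θ ^ 2 - 2 * μ' * m θ + M2) * (2 * v ^ 2)⁻¹) q := by
    have h1 : Integrable (fun θ => (-(2 * μ') * (2 * v ^ 2)⁻¹) * m θ) q := hm1.const_mul _
    have h2 : Integrable (fun θ => (2 * v ^ 2)⁻¹ * m θ ^ 2) q := hm2.const_mul _
    have h01 : Integrable (fun θ => M2 * (2 * v ^ 2)⁻¹
        + (-(2 * μ') * (2 * v ^ 2)⁻¹) * m θ) q := (integrable_const _).add h1
    refine (h01.add h2).congr (Filter.Eventually.of_forall fun θ => ?_)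
    simp only [Pi.add_apply]
    ring
  have hvar : ∫ θ, |m θ - μ'| ^ 2 ∂q = M2 - μ' ^ 2 := by
    have h1 : ∫ θ, |m θ - μ'| ^ 2 ∂q
        = ∫ θ, (μ' ^ 2 + (-(2 * μ')) * m θ + 1 * m θ ^ 2) ∂q := by
      refine integral_congr_ae (Filter.Eventually.of_forall fun θ => ?_)
      show |m θ - μ'| ^ 2 = μ' ^ 2 + (-(2 * μ')) * m θ + 1 * m θ ^ 2
      rw [sq_abs]
      ring
    rw [h1, integral_linear_prob q hm1 hm2, ← hμ'def, ← hM2def]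
    ring
  calc ∫ θ, (∫ y, gaussPdf (m θ) v y * Real.log (gaussPdf (m θ) v y / P y)) ∂q
      ≤ ∫ θ, (m θ ^ 2 - 2 * μ' * m θ + M2) * (2 * v ^ 2)⁻¹ ∂q :=
        integral_mono_of_nonneg (Filter.Eventually.of_forall hKL_nonneg) hR_int
          (Filter.Eventually.of_forall hKL_le)
    _ = M2 * (2 * v ^ 2)⁻¹ + (-(2 * μ') * (2 * v ^ 2)⁻¹) * μ' + (2 * v ^ 2)⁻¹ * M2 := by
        have h1 : ∫ θ, (m θ ^ 2 - 2 * μ' * m θ + M2) * (2 * v ^ 2)⁻¹ ∂q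
            = ∫ θ, (M2 * (2 * v ^ 2)⁻¹ + (-(2 * μ') * (2 * v ^ 2)⁻¹) * m θ
                + (2 * v ^ 2)⁻¹ * m θ ^ 2) ∂q := by
          refine integral_congr_ae (Filter.Eventually.of_forall fun θ => ?_)
          ring
        rw [h1, integral_linear_prob q hm1 hm2, ← hμ'def, ← hM2def]
    _ = (M2 - μ' ^ 2) / v ^ 2 := by
        field_simp
        ring
    _ = (∫ θ, |m θ - μ'| ^ 2 ∂q) / v ^ 2 := by rw [hvar]
end

section
/- Let Θ be a measurable space, q a probability measure on Θ, m : Θ → ℝ measurable and square-integrable with respect to q, v > 0, and fix θ* ∈ Θ with m* := m(θ*). For each θ let p_θ denote the density of N(m(θ), v²) with respect to Lebesgue measure on ℝ, set p^q(y) := ∫_Θ p_θ(y) dq(θ), and let ν := p_{θ*} dLeb = N(m*, v²) be the (well-specified) data distribution. Then the entropic risk satisfies −∫ ln p^q(y) dν(y) ≤ (1/v²) ∫ |y − ∫_Θ m dq|² dν(y) + Var_q(m)/v² − ∫_Θ KL(p_θ‖p^q) dq(θ) + (1/2) ln(2πv²), where Var_q(m) := ∫_Θ |m(θ) − ∫_Θ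 m dq|² dq(θ). (Appendix derivation of Eq. (eq_mutual): the entropic risk for the Gaussian likelihood implicitly regularizes BER^log with a negative sign.) -/
open MeasureTheory

section EEAux
open Real

open Real

lemma EEsqrt_pos {v : ℝ} (hv : 0 < v) : 0 < Real.sqrt (2 * Real.pi * v ^ 2) :=
  Real.sqrt_pos.2 (by positivity)

lemma EEgaussPdf_pos {v : ℝ} (hv : 0 < v) (a y : ℝ) : 0 < gaussPdf a v y :=
  mul_pos (inv_pos.2 (EEsqrt_pos hv)) (Real.exp_pos _)

lemma EEgaussPdf_le {v : ℝ} (hv : 0 < v) (a y : ℝ) :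
    gaussPdf a v y ≤ (Real.sqrt (2 * Real.pi * v ^ 2))⁻¹ := by
  unfold gaussPdf
  nth_rewrite 2 [← mul_one ((Real.sqrt (2 * Real.pi * v ^ 2))⁻¹)]
  refine mul_le_mul_of_nonneg_left ?_ (by positivity)
  rw [Real.exp_le_one_iff]
  have h1 : (0:ℝ) ≤ (y - a) ^ 2 / (2 * v ^ 2) := by positivity
  rw [neg_div]
  linarith

lemma EEmeasurable_gaussPdf (a v : ℝ) : Measurable (gaussPdf a v) := by
  unfold gaussPdf
  fun_prop

lemma EEexp_form {v : ℝ} (hv : 0 < v) (x : ℝ) :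
    -x ^ 2 / (2 * v ^ 2) = -((2 * v ^ 2)⁻¹) * x ^ 2 := by
  field_simp

lemma EEintegrable_exp_centered {v : ℝ} (hv : 0 < v) :
    Integrable (fun x : ℝ => Real.exp (-x ^ 2 / (2 * v ^ 2))) := by
  simp_rw [EEexp_form hv]
  exact integrable_exp_neg_mul_sq (by positivity)

lemma EEintegrable_mul_exp_centered {v : ℝ} (hv : 0 < v) :
    Integrable (fun x : ℝ => x * Real.exp (-x ^ 2 / (2 * v ^ 2))) := by
  simp_rw [EEexp_form hv]
  exact integrable_mul_exp_neg_mul_sq (by positivity)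

lemma EEintegrable_sq_mul_exp_centered {v : ℝ} (hv : 0 < v) :
    Integrable (fun x : ℝ => x ^ 2 * Real.exp (-x ^ 2 / (2 * v ^ 2))) := by
  simp_rw [EEexp_form hv]
  have h := integrable_rpow_mul_exp_neg_mul_sq (b := (2 * v ^ 2)⁻¹) (by positivity)
    (s := 2) (by norm_num)
  have h2 : ∀ x : ℝ, x ^ (2:ℝ) = x ^ (2:ℕ) := fun x => by
    rw [show ((2:ℝ)) = ((2:ℕ):ℝ) by norm_num, Real.rpow_natCast]
  simp_rw [h2] at h
  exact h

lemma EEintegral_exp_centered {v : ℝ} (hv : 0 < v) :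
    ∫ x : ℝ, Real.exp (-x ^ 2 / (2 * v ^ 2)) = Real.sqrt (2 * Real.pi * v ^ 2) := by
  simp_rw [EEexp_form hv]
  rw [integral_gaussian]
  congr 1
  rw [division_def, inv_inv]
  ring

lemma EEintegral_mul_exp_centered {v : ℝ} (hv : 0 < v) :
    ∫ x : ℝ, x * Real.exp (-x ^ 2 / (2 * v ^ 2)) = 0 := by
  have h := integral_neg_eq_self (fun x : ℝ => x * Real.exp (-x ^ 2 / (2 * v ^ 2))) volume
  simp only [neg_sq, neg_mul] at h
  rw [integral_neg] at h
  linarith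

lemma EEintegral_sq_mul_exp_centered {v : ℝ} (hv : 0 < v) :
    ∫ x : ℝ, x ^ 2 * Real.exp (-x ^ 2 / (2 * v ^ 2))
      = v ^ 2 * Real.sqrt (2 * Real.pi * v ^ 2) := by
  have hb : (0:ℝ) < (2 * v ^ 2)⁻¹ := by positivity
  have habs : ∀ x : ℝ, x ^ 2 * Real.exp (-x ^ 2 / (2 * v ^ 2))
      = |x| ^ 2 * Real.exp (-|x| ^ 2 / (2 * v ^ 2)) := fun x => by rw [sq_abs]
  rw [show (fun x : ℝ => x ^ 2 * Real.exp (-x ^ 2 / (2 * v ^ 2)))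
      = fun x : ℝ => (fun t : ℝ => t ^ 2 * Real.exp (-t ^ 2 / (2 * v ^ 2))) |x|
    from funext habs] at *
  rw [integral_comp_abs (f := fun t : ℝ => t ^ 2 * Real.exp (-t ^ 2 / (2 * v ^ 2)))]
  simp_rw [EEexp_form hv]
  have h2 : ∀ x : ℝ, x ^ (2:ℝ) = x ^ (2:ℕ) := fun x => by
    rw [show ((2:ℝ)) = ((2:ℕ):ℝ) by norm_num, Real.rpow_natCast]
  have key := integral_rpow_mul_exp_neg_mul_rpow (p := 2) (q := 2) (b := (2 * v ^ 2)⁻¹)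
    (by norm_num) (by norm_num) hb
  simp_rw [h2] at key
  rw [key]
  have hgamma : Real.Gamma ((2 + 1) / 2) = Real.sqrt π / 2 := by
    rw [show ((2:ℝ) + 1) / 2 = 1/2 + 1 by norm_num, Real.Gamma_add_one (by norm_num),
      Real.Gamma_one_half_eq]
    ring
  rw [hgamma]
  have h2v : (0:ℝ) < 2 * v ^ 2 := by positivity
  have e1 : ((2 * v ^ 2)⁻¹ : ℝ) ^ (-(2 + 1) / 2 : ℝ) = (2 * v ^ 2) ^ ((3:ℝ)/2) := by
    rw [Real.inv_rpow h2v.le, ← Real.rpow_neg h2v.le]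
    norm_num
  have e2 : ((2 * v ^ 2) : ℝ) ^ ((3:ℝ)/2) = (2 * v ^ 2) * Real.sqrt (2 * v ^ 2) := by
    rw [show (3:ℝ)/2 = 1 + 1/2 by norm_num, Real.rpow_add h2v, Real.rpow_one,
      ← Real.sqrt_eq_rpow]
  have e3 : Real.sqrt (2 * π * v ^ 2) = Real.sqrt (2 * v ^ 2) * Real.sqrt π := by
    rw [show 2 * π * v ^ 2 = (2 * v ^ 2) * π by ring, Real.sqrt_mul h2v.le]
  rw [e1, e2, e3]
  ring


lemma EEshift_integral {v : ℝ} (a : ℝ) (f : ℝ → ℝ) :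
    ∫ y : ℝ, gaussPdf a v y * f (y - a)
      = (Real.sqrt (2 * Real.pi * v ^ 2))⁻¹
        * ∫ x : ℝ, Real.exp (-x ^ 2 / (2 * v ^ 2)) * f x := by
  unfold gaussPdf
  simp_rw [mul_assoc]
  rw [integral_const_mul]
  congr 1
  exact integral_sub_right_eq_self (fun x => Real.exp (-x ^ 2 / (2 * v ^ 2)) * f x) a

lemma EEshift_integrable {v : ℝ} (a : ℝ) {f : ℝ → ℝ}
    (hf : Integrable (fun x : ℝ => Real.exp (-x ^ 2 / (2 * v ^ 2)) * f x)) :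
    Integrable (fun y : ℝ => gaussPdf a v y * f (y - a)) := by
  unfold gaussPdf
  simp_rw [mul_assoc]
  exact ((hf.comp_sub_right a).const_mul _)

lemma EEintegrable_gaussPdf {v : ℝ} (hv : 0 < v) (a : ℝ) :
    Integrable (gaussPdf a v) := by
  have := EEshift_integrable (v := v) a (f := fun _ => (1:ℝ))
    (by simpa using EEintegrable_exp_centered hv)
  simpa using this

lemma EEintegral_gaussPdf {v : ℝ} (hv : 0 < v) (a : ℝ) :
    ∫ y : ℝ, gaussPdf a v y = 1 := by
  have h := EEshift_integral (v := v) a (fun _ => (1:ℝ))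
  simp only [mul_one] at h
  rw [h, EEintegral_exp_centered hv, inv_mul_cancel₀ (EEsqrt_pos hv).ne']

lemma EEcomb_integrable {v : ℝ} (hv : 0 < v) (d : ℝ) :
    Integrable (fun x : ℝ => Real.exp (-x ^ 2 / (2 * v ^ 2)) * (x + d) ^ 2) := by
  have h : (fun x : ℝ => Real.exp (-x ^ 2 / (2 * v ^ 2)) * (x + d) ^ 2)
      = fun x : ℝ => (x ^ 2 * Real.exp (-x ^ 2 / (2 * v ^ 2)))
        + ((2 * d) * (x * Real.exp (-x ^ 2 / (2 * v ^ 2)))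
        + (d ^ 2) * Real.exp (-x ^ 2 / (2 * v ^ 2))) := by
    funext x; ring
  rw [h]
  exact (EEintegrable_sq_mul_exp_centered hv).add
    (((EEintegrable_mul_exp_centered hv).const_mul _).add
      ((EEintegrable_exp_centered hv).const_mul _))

lemma EEintegrable_gaussPdf_mul_sq {v : ℝ} (hv : 0 < v) (a t : ℝ) :
    Integrable (fun y : ℝ => gaussPdf a v y * (y - t) ^ 2) := by
  have h := EEshift_integrable (v := v) a (f := fun x => (x + (a - t)) ^ 2)
    (EEcomb_integrable hv (a - t))
  refine h.congr (Filter.Eventually.of_forall fun y => ?_)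
  ring_nf

lemma EEintegral_gaussPdf_mul_sq {v : ℝ} (hv : 0 < v) (a t : ℝ) :
    ∫ y : ℝ, gaussPdf a v y * (y - t) ^ 2 = v ^ 2 + (a - t) ^ 2 := by
  have h0 : (fun y : ℝ => gaussPdf a v y * (y - t) ^ 2)
      = fun y : ℝ => gaussPdf a v y * (fun x => (x + (a - t)) ^ 2) (y - a) := by
    funext y; simp only; ring_nf
  rw [h0, EEshift_integral (v := v) a (fun x => (x + (a - t)) ^ 2)]
  have h : (fun x : ℝ => Real.exp (-x ^ 2 / (2 * v ^ 2)) * (x + (a - t)) ^ 2)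
      = fun x : ℝ => (x ^ 2 * Real.exp (-x ^ 2 / (2 * v ^ 2)))
        + ((2 * (a - t)) * (x * Real.exp (-x ^ 2 / (2 * v ^ 2)))
        + ((a - t) ^ 2) * Real.exp (-x ^ 2 / (2 * v ^ 2))) := by
    funext x; ring
  have i2 : Integrable (fun x : ℝ => (2 * (a - t)) * (x * Real.exp (-x ^ 2 / (2 * v ^ 2)))) :=
    (EEintegrable_mul_exp_centered hv).const_mul _
  have i3 : Integrable (fun x : ℝ => ((a - t) ^ 2) * Real.exp (-x ^ 2 / (2 * v ^ 2))) :=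
    (EEintegrable_exp_centered hv).const_mul _
  have i23 : Integrable (fun x : ℝ => (2 * (a - t)) * (x * Real.exp (-x ^ 2 / (2 * v ^ 2)))
      + ((a - t) ^ 2) * Real.exp (-x ^ 2 / (2 * v ^ 2))) := i2.add i3
  rw [h, integral_add (EEintegrable_sq_mul_exp_centered hv) i23,
    integral_add i2 i3,
    integral_const_mul, integral_const_mul,
    EEintegral_sq_mul_exp_centered hv, EEintegral_mul_exp_centered hv,
    EEintegral_exp_centered hv]
  have hs := (EEsqrt_pos hv).ne'
  field_simp
  ring

lemma EElog_gaussPdf {v : ℝ} (hv : 0 < v) (a y : ℝ) :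
    Real.log (gaussPdf a v y)
      = -(Real.log (2 * Real.pi * v ^ 2)) / 2 - (y - a) ^ 2 / (2 * v ^ 2) := by
  unfold gaussPdf
  rw [Real.log_mul (by positivity) (Real.exp_ne_zero _), Real.log_inv,
    Real.log_sqrt (by positivity), Real.log_exp]
  ring

lemma EEintegrable_gaussPdf_mul_log_self {v : ℝ} (hv : 0 < v) (a : ℝ) :
    Integrable (fun y : ℝ => gaussPdf a v y * Real.log (gaussPdf a v y)) := by
  have h : (fun y : ℝ => gaussPdf a v y * Real.log (gaussPdf a v y))
      = fun y : ℝ => (-(Real.log (2 * Real.pi * v ^ 2)) / 2) * gaussPdf a v y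
          - (1 / (2 * v ^ 2)) * (gaussPdf a v y * (y - a) ^ 2) := by
    funext y; rw [EElog_gaussPdf hv]; ring
  rw [h]
  exact ((EEintegrable_gaussPdf hv a).const_mul _).sub
    ((EEintegrable_gaussPdf_mul_sq hv a a).const_mul _)

lemma EEintegral_gaussPdf_mul_log_self {v : ℝ} (hv : 0 < v) (a : ℝ) :
    ∫ y : ℝ, gaussPdf a v y * Real.log (gaussPdf a v y)
      = -(Real.log (2 * Real.pi * v ^ 2)) / 2 - 1 / 2 := by
  have h : (fun y : ℝ => gaussPdf a v y * Real.log (gaussPdf a v y))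
      = fun y : ℝ => (-(Real.log (2 * Real.pi * v ^ 2)) / 2) * gaussPdf a v y
          - (1 / (2 * v ^ 2)) * (gaussPdf a v y * (y - a) ^ 2) := by
    funext y; rw [EElog_gaussPdf hv]; ring
  have i1 : Integrable (fun y : ℝ => (-(Real.log (2 * Real.pi * v ^ 2)) / 2) * gaussPdf a v y) :=
    (EEintegrable_gaussPdf hv a).const_mul _
  have i2 : Integrable (fun y : ℝ => (1 / (2 * v ^ 2)) * (gaussPdf a v y * (y - a) ^ 2)) :=
    (EEintegrable_gaussPdf_mul_sq hv a a).const_mul _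
  rw [h, integral_sub i1 i2,
    integral_const_mul, integral_const_mul, EEintegral_gaussPdf hv,
    EEintegral_gaussPdf_mul_sq hv a a]
  have : (0:ℝ) < v ^ 2 := by positivity
  field_simp
  ring



lemma EEintegrable_sandwich {α : Type*} [MeasurableSpace α] {μ : Measure α} {f L U : α → ℝ}
    (hf : AEStronglyMeasurable f μ) (hLi : Integrable L μ) (hUi : Integrable U μ)
    (hL : ∀ x, L x ≤ f x) (hU : ∀ x, f x ≤ U x) : Integrable f μ := by
  have hg : Integrable (fun x => |L x| + |U x|) μ := hLi.abs.add hUi.abs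
  refine hg.mono' hf (Filter.Eventually.of_forall fun x => ?_)
  rw [Real.norm_eq_abs, abs_le]
  have h1 := neg_abs_le (L x)
  have h2 := le_abs_self (U x)
  have h3 := abs_nonneg (L x)
  have h4 := abs_nonneg (U x)
  have h5 := hL x
  have h6 := hU x
  constructor <;> linarith

lemma EEintegral_pos {α : Type*} [MeasurableSpace α] {μ : Measure α} [IsProbabilityMeasure μ]
    {f : α → ℝ} (hf : Integrable f μ) (h0 : ∀ x, 0 < f x) : 0 < ∫ x, f x ∂μ := by
  refine (integral_pos_iff_support_of_nonneg (fun x => (h0 x).le) hf).2 ?_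
  have hs : Function.support f = Set.univ := Set.eq_univ_of_forall fun x => (h0 x).ne'
  rw [hs, measure_univ]
  norm_num

lemma EElog_integral_ge {Θ : Type*} [MeasurableSpace Θ] {q : Measure Θ} [IsProbabilityMeasure q]
    {f g : Θ → ℝ} (hg : Integrable g q) (hfm : AEStronglyMeasurable f q)
    (hfb : ∀ θ, f θ ≤ 1) (hfg : ∀ θ, f θ = Real.exp (g θ)) :
    ∫ θ, g θ ∂q ≤ Real.log (∫ θ, f θ ∂q) := by
  have hfpos : ∀ θ, 0 < f θ := fun θ => (hfg θ) ▸ Real.exp_pos _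
  have hfi : Integrable f q := EEintegrable_sandwich hfm (integrable_const 0)
    (integrable_const 1) (fun θ => (hfpos θ).le) hfb
  set T := ∫ θ, f θ ∂q with hT
  have hTpos : 0 < T := EEintegral_pos hfi hfpos
  have hpt : ∀ θ, g θ ≤ f θ / T - 1 + Real.log T := by
    intro θ
    have h1 : Real.log (f θ / T) ≤ f θ / T - 1 :=
      Real.log_le_sub_one_of_pos (div_pos (hfpos θ) hTpos)
    rw [Real.log_div (hfpos θ).ne' hTpos.ne'] at h1
    have h2 : Real.log (f θ) = g θ := by rw [hfg θ, Real.log_exp]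
    linarith
  have hUi : Integrable (fun θ => f θ / T - 1 + Real.log T) q := by
    have : Integrable (fun θ => f θ / T) q := by
      simpa [div_eq_inv_mul] using hfi.const_mul T⁻¹
    exact (this.sub (integrable_const 1)).add (integrable_const _)
  have hmono := integral_mono hg hUi hpt
  have hA : Integrable (fun θ => f θ / T) q := by
    simpa [div_eq_inv_mul] using hfi.const_mul T⁻¹
  have hB : Integrable (fun θ => f θ / T - 1) q := hA.sub (integrable_const 1)
  have hcalc : ∫ θ, (f θ / T - 1 + Real.log T) ∂q = Real.log T := by
    rw [integral_add hB (integrable_const _),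
      integral_sub hA (integrable_const 1),
      integral_const, integral_const]
    simp only [measure_univ, probReal_univ, ENNReal.toReal_one, one_smul, smul_eq_mul]
    have : ∫ θ, f θ / T ∂q = 1 := by
      rw [integral_div, ← hT, div_self hTpos.ne']
    rw [this]
    ring
  rw [hcalc] at hmono
  exact hmono

lemma EEfubini_nonneg {Θ : Type*} [MeasurableSpace Θ] (q : Measure Θ) [SFinite q]
    {f : Θ → ℝ → ℝ} (hmeas : Measurable (Function.uncurry f))
    (h0 : ∀ θ y, 0 ≤ f θ y)
    (hsec : ∀ θ, Integrable (f θ))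
    (hint : Integrable (fun θ => ∫ y, f θ y) q) :
    Integrable (fun y => ∫ θ, f θ y ∂q) volume ∧
      (∫ y, ∫ θ, f θ y ∂q) = ∫ θ, (∫ y, f θ y) ∂q := by
  have hprod : Integrable (Function.uncurry f) (q.prod volume) := by
    rw [integrable_prod_iff hmeas.aestronglyMeasurable]
    refine ⟨Filter.Eventually.of_forall hsec, ?_⟩
    refine hint.congr (Filter.Eventually.of_forall fun θ => ?_)
    simp only
    refine integral_congr_ae (Filter.Eventually.of_forall fun y => ?_)
    exact (Real.norm_of_nonneg (h0 θ y)).symm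
  exact ⟨hprod.integral_prod_right, (integral_integral_swap hprod).symm⟩

noncomputable def EEG {Θ : Type*} [MeasurableSpace Θ] (q : Measure Θ) (m : Θ → ℝ) (v y : ℝ) :
    ℝ := ∫ θ', gaussPdf (m θ') v y ∂q

section Main
variable {Θ : Type*} [MeasurableSpace Θ] (q : Measure Θ) [IsProbabilityMeasure q]
  {m : Θ → ℝ} (v : ℝ)

lemma EEjoint (hm_meas : Measurable m) :
    Measurable (fun z : Θ × ℝ => gaussPdf (m z.1) v z.2) := by
  unfold gaussPdf
  exact measurable_const.mul (Real.measurable_exp.comp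
    ((((measurable_snd.sub (hm_meas.comp measurable_fst)).pow_const 2).neg).div_const _))

lemma EEsec_meas (hm_meas : Measurable m) (y : ℝ) :
    Measurable (fun θ => gaussPdf (m θ) v y) := by
  unfold gaussPdf
  exact measurable_const.mul (Real.measurable_exp.comp
    ((((measurable_const.sub hm_meas).pow_const 2).neg).div_const _))

lemma EEsec_int (hm_meas : Measurable m) (hv : 0 < v) (y : ℝ) :
    Integrable (fun θ => gaussPdf (m θ) v y) q :=
  EEintegrable_sandwich (EEsec_meas v hm_meas y).aestronglyMeasurable
    (integrable_const 0) (integrable_const ((Real.sqrt (2 * Real.pi * v ^ 2))⁻¹))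
    (fun θ => (EEgaussPdf_pos hv (m θ) y).le) (fun θ => EEgaussPdf_le hv (m θ) y)

lemma EEG_pos (hm_meas : Measurable m) (hv : 0 < v) (y : ℝ) : 0 < EEG q m v y :=
  EEintegral_pos (EEsec_int q v hm_meas hv y) (fun θ => EEgaussPdf_pos hv (m θ) y)

lemma EEG_le (hm_meas : Measurable m) (hv : 0 < v) (y : ℝ) :
    EEG q m v y ≤ (Real.sqrt (2 * Real.pi * v ^ 2))⁻¹ := by
  have h := integral_mono (EEsec_int q v hm_meas hv y)
    (integrable_const ((Real.sqrt (2 * Real.pi * v ^ 2))⁻¹))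
    (fun θ => EEgaussPdf_le hv (m θ) y)
  simpa [EEG] using h

lemma EEG_meas (hm_meas : Measurable m) : Measurable (EEG q m v) := by
  have := (EEjoint v hm_meas).stronglyMeasurable.integral_prod_left' (μ := q)
  exact this.measurable

lemma EEquad_int (hm_meas : Measurable m) (hm : MemLp m 2 q) (t : ℝ) :
    Integrable (fun θ => (t - m θ) ^ 2) q := by
  have hm1 : Integrable m q := hm.integrable one_le_two
  have hm2 : Integrable (fun θ => m θ ^ 2) q := hm.integrable_sq
  have h := hm2.add ((hm1.const_mul (-(2 * t))).add (integrable_const (t ^ 2)))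
  refine h.congr (Filter.Eventually.of_forall fun θ => ?_)
  simp only [Pi.add_apply]
  ring

lemma EEsplit (hm_meas : Measurable m) (hm : MemLp m 2 q) (t : ℝ) :
    ∫ θ, (t - m θ) ^ 2 ∂q
      = (∫ θ, m θ ^ 2 ∂q) - 2 * t * (∫ θ, m θ ∂q) + t ^ 2 := by
  have hm1 : Integrable m q := hm.integrable one_le_two
  have hm2 : Integrable (fun θ => m θ ^ 2) q := hm.integrable_sq
  have h1 : Integrable (fun θ => (-(2 * t)) * m θ) q := hm1.const_mul _
  have h2 : Integrable (fun θ => (-(2 * t)) * m θ + t ^ 2) q := h1.add (integrable_const _)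
  have he : (fun θ => (t - m θ) ^ 2)
      = fun θ => m θ ^ 2 + ((-(2 * t)) * m θ + t ^ 2) := by
    funext θ; ring
  rw [he, integral_add hm2 h2, integral_add h1 (integrable_const _),
    integral_const_mul, integral_const]
  simp only [measure_univ, probReal_univ, ENNReal.toReal_one, smul_eq_mul, one_mul]
  ring

lemma EEMB (hm_meas : Measurable m) (hm : MemLp m 2 q) (t : ℝ) :
    ∫ θ, (t - m θ) ^ 2 ∂q
      = (t - ∫ θ, m θ ∂q) ^ 2 + ∫ θ, (m θ - ∫ θ', m θ' ∂q) ^ 2 ∂q := by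
  have h1 := EEsplit q hm_meas hm t
  have h2 := EEsplit q hm_meas hm (∫ θ, m θ ∂q)
  have h3 : (fun θ => (m θ - ∫ θ', m θ' ∂q) ^ 2)
      = fun θ => ((∫ θ', m θ' ∂q) - m θ) ^ 2 := by funext θ; ring
  rw [h3, h2]
  rw [h1]
  ring

lemma EEjensen (hm_meas : Measurable m) (hm : MemLp m 2 q) (hv : 0 < v) (y : ℝ) :
    -Real.log (EEG q m v y)
      ≤ Real.log (2 * Real.pi * v ^ 2) / 2
        + ((y - ∫ θ, m θ ∂q) ^ 2 + ∫ θ, (m θ - ∫ θ', m θ' ∂q) ^ 2 ∂q) / (2 * v ^ 2) := by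
  have hsq := EEsqrt_pos hv
  have hEpos : 0 < ∫ θ, Real.exp (-(y - m θ) ^ 2 / (2 * v ^ 2)) ∂q := by
    refine EEintegral_pos ?_ (fun θ => Real.exp_pos _)
    refine EEintegrable_sandwich ?_ (integrable_const 0) (integrable_const 1)
      (fun θ => (Real.exp_pos _).le) (fun θ => Real.exp_le_one_iff.2 (by
        rw [neg_div]
        have : (0:ℝ) ≤ (y - m θ) ^ 2 / (2 * v ^ 2) := by positivity
        linarith))
    exact (Real.measurable_exp.comp
      ((((measurable_const.sub hm_meas).pow_const 2).neg).div_const _)).aestronglyMeasurable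
  have hGeq : EEG q m v y = (Real.sqrt (2 * Real.pi * v ^ 2))⁻¹
      * ∫ θ, Real.exp (-(y - m θ) ^ 2 / (2 * v ^ 2)) ∂q := by
    unfold EEG gaussPdf
    rw [integral_const_mul]
  have hgint : Integrable (fun θ => -(y - m θ) ^ 2 / (2 * v ^ 2)) q := by
    have h := (EEquad_int q hm_meas hm y).const_mul (-(2 * v ^ 2)⁻¹)
    refine h.congr (Filter.Eventually.of_forall fun θ => ?_)
    simp only
    field_simp
  have hjen := EElog_integral_ge (q := q)
    (f := fun θ => Real.exp (-(y - m θ) ^ 2 / (2 * v ^ 2)))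
    (g := fun θ => -(y - m θ) ^ 2 / (2 * v ^ 2)) hgint
    (by fun_prop : Measurable fun θ => Real.exp (-(y - m θ) ^ 2 / (2 * v ^ 2))).aestronglyMeasurable
    (fun θ => Real.exp_le_one_iff.2 (by
      rw [neg_div]
      have : (0:ℝ) ≤ (y - m θ) ^ 2 / (2 * v ^ 2) := by positivity
      linarith))
    (fun θ => rfl)
  have hgval : ∫ θ, -(y - m θ) ^ 2 / (2 * v ^ 2) ∂q
      = -(((y - ∫ θ, m θ ∂q) ^ 2 + ∫ θ, (m θ - ∫ θ', m θ' ∂q) ^ 2 ∂q) / (2 * v ^ 2)) := by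
    have he : (fun θ => -(y - m θ) ^ 2 / (2 * v ^ 2))
        = fun θ => (-(2 * v ^ 2)⁻¹) * (y - m θ) ^ 2 := by
      funext θ; field_simp
    rw [he, integral_const_mul, EEMB q hm_meas hm y]
    field_simp
  have hlogG : Real.log (EEG q m v y)
      = -(Real.log (2 * Real.pi * v ^ 2)) / 2
        + Real.log (∫ θ, Real.exp (-(y - m θ) ^ 2 / (2 * v ^ 2)) ∂q) := by
    rw [hGeq, Real.log_mul (inv_pos.2 hsq).ne' hEpos.ne', Real.log_inv,
      Real.log_sqrt (by positivity)]
    ring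
  rw [hlogG]
  rw [hgval] at hjen
  linarith

end Main
end EEAux

set_option maxHeartbeats 2000000 in
/-- Appendix derivation of Eq. (eq_mutual): for the Gaussian likelihood
`p_θ = N(m θ, v²)` with posterior predictive density
`p^q y = ∫ p_θ y dq` and well-specified data distribution
`ν = p_{θ*} dLeb = N(m*, v²)` (written below via the density `gaussPdf m* v`),
the entropic risk satisfies
`−∫ ln p^q dν ≤ (1/v²) ∫ |y − ∫ m dq|² dν + Var_q(m)/v²
  − ∫ KL(p_θ‖p^q) dq + (1/2) ln(2πv²)`:
the entropic risk implicitly regularizes `BER^log` with a negative sign.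
All integrals over `y` are with respect to Lebesgue measure on `ℝ`. -/
theorem entropic_risk_bound_gaussian
    {Θ : Type*} [MeasurableSpace Θ] (q : Measure Θ) [IsProbabilityMeasure q]
    (m : Θ → ℝ) (hm_meas : Measurable m) (hm : MemLp m 2 q)
    (v : ℝ) (hv : 0 < v) (θs : Θ) :
    -∫ y : ℝ, gaussPdf (m θs) v y *
        Real.log (∫ θ', gaussPdf (m θ') v y ∂q)
      ≤ (1 / v ^ 2) * (∫ y : ℝ, gaussPdf (m θs) v y * |y - ∫ θ, m θ ∂q| ^ 2)
        + (∫ θ, |m θ - ∫ θ', m θ' ∂q| ^ 2 ∂q) / v ^ 2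
        - (∫ θ, (∫ y : ℝ, gaussPdf (m θ) v y *
            Real.log (gaussPdf (m θ) v y / ∫ θ', gaussPdf (m θ') v y ∂q)) ∂q)
        + (1 / 2) * Real.log (2 * Real.pi * v ^ 2) := by
  have hv2 : (0:ℝ) < v ^ 2 := by positivity
  simp_rw [show ∀ y : ℝ, (∫ θ', gaussPdf (m θ') v y ∂q) = EEG q m v y from fun y => rfl,
    sq_abs]
  set mb := ∫ θ, m θ ∂q with hmb
  set V := ∫ θ, (m θ - mb) ^ 2 ∂q with hVdef
  set L := Real.log (2 * Real.pi * v ^ 2) with hL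
  have hV0 : 0 ≤ V := hVdef ▸ integral_nonneg fun θ => sq_nonneg _
  have hT1 : ∫ y : ℝ, gaussPdf (m θs) v y * (y - mb) ^ 2 = v ^ 2 + (m θs - mb) ^ 2 :=
    EEintegral_gaussPdf_mul_sq hv _ _
  have hJ : ∀ y : ℝ, -Real.log (EEG q m v y)
      ≤ L / 2 + ((y - mb) ^ 2 + V) / (2 * v ^ 2) := by
    intro y
    have := EEjensen q v hm_meas hm hv y
    rw [← hmb, ← hVdef, ← hL] at this
    exact this
  have hlogGe : ∀ y : ℝ, L / 2 ≤ -Real.log (EEG q m v y) := by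
    intro y
    have h1 := Real.log_le_log (EEG_pos q v hm_meas hv y) (EEG_le q v hm_meas hv y)
    rw [Real.log_inv, Real.log_sqrt (by positivity), ← hL] at h1
    linarith
  have hA : -∫ y : ℝ, gaussPdf (m θs) v y * Real.log (EEG q m v y)
      ≤ L / 2 + V / (2 * v ^ 2) + (2 * v ^ 2)⁻¹ * (v ^ 2 + (m θs - mb) ^ 2) := by
    have hrw : -∫ y : ℝ, gaussPdf (m θs) v y * Real.log (EEG q m v y)
        = ∫ y : ℝ, gaussPdf (m θs) v y * (-Real.log (EEG q m v y)) := by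
      rw [← integral_neg]
      congr 1
      funext y
      ring
    have hUint : Integrable (fun y : ℝ => (L / 2 + V / (2 * v ^ 2)) * gaussPdf (m θs) v y
        + (2 * v ^ 2)⁻¹ * (gaussPdf (m θs) v y * (y - mb) ^ 2)) :=
      ((EEintegrable_gaussPdf hv _).const_mul _).add
        ((EEintegrable_gaussPdf_mul_sq hv _ _).const_mul _)
    have hLint : Integrable (fun y : ℝ => (L / 2) * gaussPdf (m θs) v y) :=
      (EEintegrable_gaussPdf hv _).const_mul _
    have hptU : ∀ y : ℝ, gaussPdf (m θs) v y * (-Real.log (EEG q m v y))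
        ≤ (L / 2 + V / (2 * v ^ 2)) * gaussPdf (m θs) v y
          + (2 * v ^ 2)⁻¹ * (gaussPdf (m θs) v y * (y - mb) ^ 2) := by
      intro y
      calc gaussPdf (m θs) v y * (-Real.log (EEG q m v y))
          ≤ gaussPdf (m θs) v y * (L / 2 + ((y - mb) ^ 2 + V) / (2 * v ^ 2)) :=
            mul_le_mul_of_nonneg_left (hJ y) (EEgaussPdf_pos hv _ _).le
        _ = (L / 2 + V / (2 * v ^ 2)) * gaussPdf (m θs) v y
            + (2 * v ^ 2)⁻¹ * (gaussPdf (m θs) v y * (y - mb) ^ 2) := by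
            field_simp
            ring
    have hptL : ∀ y : ℝ, (L / 2) * gaussPdf (m θs) v y
        ≤ gaussPdf (m θs) v y * (-Real.log (EEG q m v y)) := by
      intro y
      rw [mul_comm]
      exact mul_le_mul_of_nonneg_left (hlogGe y) (EEgaussPdf_pos hv _ _).le
    have hmeasf : AEStronglyMeasurable
        (fun y : ℝ => gaussPdf (m θs) v y * (-Real.log (EEG q m v y))) volume :=
      ((EEmeasurable_gaussPdf _ _).mul
        ((Real.measurable_log.comp (EEG_meas q v hm_meas)).neg)).aestronglyMeasurable
    have hfint : Integrable (fun y : ℝ => gaussPdf (m θs) v y * (-Real.log (EEG q m v y))) :=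
      EEintegrable_sandwich hmeasf hLint hUint hptL hptU
    have hle := integral_mono hfint hUint hptU
    have hval : ∫ y : ℝ, ((L / 2 + V / (2 * v ^ 2)) * gaussPdf (m θs) v y
        + (2 * v ^ 2)⁻¹ * (gaussPdf (m θs) v y * (y - mb) ^ 2))
        = L / 2 + V / (2 * v ^ 2) + (2 * v ^ 2)⁻¹ * (v ^ 2 + (m θs - mb) ^ 2) := by
      rw [integral_add ((EEintegrable_gaussPdf hv _).const_mul _)
          ((EEintegrable_gaussPdf_mul_sq hv _ _).const_mul _),
        integral_const_mul, integral_const_mul, EEintegral_gaussPdf hv,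
        EEintegral_gaussPdf_mul_sq hv]
      ring
    rw [hrw]
    rw [hval] at hle
    exact hle
  -- the nonnegative excess-log function F
  set F : ℝ → ℝ := fun y => -Real.log (EEG q m v y) - L / 2 with hFdef
  have hF0 : ∀ y, 0 ≤ F y := fun y => by
    simp only [hFdef]; have := hlogGe y; linarith
  have hFub : ∀ y, F y ≤ ((y - mb) ^ 2 + V) / (2 * v ^ 2) := fun y => by
    simp only [hFdef]; have := hJ y; linarith
  have hFmeas : Measurable F := by
    simp only [hFdef]
    exact ((Real.measurable_log.comp (EEG_meas q v hm_meas)).neg).sub measurable_const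
  -- Fubini S0 : integrability and total mass of EEG
  obtain ⟨hGint0, hGswap0⟩ := EEfubini_nonneg q
    (f := fun (θ : Θ) (y : ℝ) => gaussPdf (m θ) v y) (EEjoint v hm_meas)
    (fun θ y => (EEgaussPdf_pos hv _ _).le)
    (fun θ => EEintegrable_gaussPdf hv _)
    ((integrable_const (1:ℝ)).congr (Filter.Eventually.of_forall fun θ =>
      (EEintegral_gaussPdf hv (m θ)).symm))
  have hGint : Integrable (EEG q m v) := hGint0
  have hGone : ∫ y, EEG q m v y = 1 := by
    have h2 : ∫ θ, (∫ y, gaussPdf (m θ) v y) ∂q = 1 := by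
      rw [integral_congr_ae (Filter.Eventually.of_forall fun θ =>
        EEintegral_gaussPdf hv (m θ))]
      simp
    exact hGswap0.trans h2
  have hq2 : Integrable (fun θ => (m θ - mb) ^ 2) q :=
    (EEquad_int q hm_meas hm mb).congr (Filter.Eventually.of_forall fun θ => by ring)
  -- Fubini S4 : second moment of EEG
  obtain ⟨hGsqint0, hGswap4⟩ := EEfubini_nonneg q
    (f := fun (θ : Θ) (y : ℝ) => gaussPdf (m θ) v y * (y - mb) ^ 2)
    (by exact (EEjoint v hm_meas).mul (by fun_prop : Measurable fun z : Θ × ℝ => (z.2 - mb) ^ 2))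
    (fun θ y => mul_nonneg (EEgaussPdf_pos hv _ _).le (sq_nonneg _))
    (fun θ => EEintegrable_gaussPdf_mul_sq hv _ _)
    (((integrable_const (v ^ 2)).add hq2).congr (Filter.Eventually.of_forall fun θ => by
      simp only [Pi.add_apply]
      exact (EEintegral_gaussPdf_mul_sq hv (m θ) mb).symm))
  have hGsqint : Integrable (fun y => EEG q m v y * (y - mb) ^ 2) :=
    hGsqint0.congr (Filter.Eventually.of_forall fun y =>
      integral_mul_const _ (fun θ => gaussPdf (m θ) v y))
  have hGsqval : ∫ y, EEG q m v y * (y - mb) ^ 2 = v ^ 2 + V := by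
    have h1 : ∫ y, EEG q m v y * (y - mb) ^ 2
        = ∫ y, ∫ θ, gaussPdf (m θ) v y * (y - mb) ^ 2 ∂q :=
      integral_congr_ae (Filter.Eventually.of_forall fun y =>
        (integral_mul_const _ (fun θ => gaussPdf (m θ) v y)).symm)
    rw [h1, hGswap4, integral_congr_ae (Filter.Eventually.of_forall fun θ =>
        EEintegral_gaussPdf_mul_sq hv (m θ) mb),
      integral_add (integrable_const _) hq2, integral_const, ← hVdef]
    simp [measure_univ]
  -- Fubini S3 : the function EEG * F
  have hptup : ∀ θ y, gaussPdf (m θ) v y * F y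
      ≤ (2 * v ^ 2)⁻¹ * (gaussPdf (m θ) v y * (y - mb) ^ 2)
        + (V / (2 * v ^ 2)) * gaussPdf (m θ) v y := by
    intro θ y
    calc gaussPdf (m θ) v y * F y
        ≤ gaussPdf (m θ) v y * (((y - mb) ^ 2 + V) / (2 * v ^ 2)) :=
          mul_le_mul_of_nonneg_left (hFub y) (EEgaussPdf_pos hv _ _).le
      _ = _ := by field_simp
  have hupint : ∀ θ, Integrable (fun y => (2 * v ^ 2)⁻¹ * (gaussPdf (m θ) v y * (y - mb) ^ 2)
      + (V / (2 * v ^ 2)) * gaussPdf (m θ) v y) := fun θ =>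
    ((EEintegrable_gaussPdf_mul_sq hv _ _).const_mul _).add
      ((EEintegrable_gaussPdf hv _).const_mul _)
  have hsec3 : ∀ θ, Integrable (fun y => gaussPdf (m θ) v y * F y) := by
    intro θ
    refine EEintegrable_sandwich ?_ (integrable_zero _ _ _ : Integrable (fun _ : ℝ => (0:ℝ)) volume) (hupint θ)
      (fun y => mul_nonneg (EEgaussPdf_pos hv _ _).le (hF0 y)) (hptup θ)
    exact ((EEmeasurable_gaussPdf _ _).mul hFmeas).aestronglyMeasurable
  have hsecval_le : ∀ θ, (∫ y, gaussPdf (m θ) v y * F y)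
      ≤ (2 * v ^ 2)⁻¹ * (v ^ 2 + (m θ - mb) ^ 2 + V) := by
    intro θ
    have h := integral_mono (hsec3 θ) (hupint θ) (hptup θ)
    rw [integral_add ((EEintegrable_gaussPdf_mul_sq hv _ _).const_mul _)
        ((EEintegrable_gaussPdf hv _).const_mul _),
      integral_const_mul, integral_const_mul, EEintegral_gaussPdf_mul_sq hv,
      EEintegral_gaussPdf hv] at h
    have he : (2 * v ^ 2)⁻¹ * (v ^ 2 + (m θ - mb) ^ 2)
        + V / (2 * v ^ 2) * 1 = (2 * v ^ 2)⁻¹ * (v ^ 2 + (m θ - mb) ^ 2 + V) := by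
      field_simp
    linarith
  have hint3meas : Measurable (fun θ => ∫ y, gaussPdf (m θ) v y * F y) := by
    have := (((EEjoint v hm_meas).mul
      (hFmeas.comp measurable_snd)).stronglyMeasurable).integral_prod_right' (ν := volume)
    exact this.measurable
  have hint3 : Integrable (fun θ => ∫ y, gaussPdf (m θ) v y * F y) q := by
    refine EEintegrable_sandwich hint3meas.aestronglyMeasurable (integrable_const 0) ?_
      (fun θ => integral_nonneg fun y => mul_nonneg (EEgaussPdf_pos hv _ _).le (hF0 y))
      hsecval_le
    exact (((integrable_const (v ^ 2)).add hq2).add (integrable_const V)).const_mul _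
  obtain ⟨hGFint0, hGswap3⟩ := EEfubini_nonneg q
    (f := fun (θ : Θ) (y : ℝ) => gaussPdf (m θ) v y * F y)
    ((EEjoint v hm_meas).mul (hFmeas.comp measurable_snd))
    (fun θ y => mul_nonneg (EEgaussPdf_pos hv _ _).le (hF0 y)) hsec3 hint3
  have hGFint : Integrable (fun y => EEG q m v y * F y) :=
    hGFint0.congr (Filter.Eventually.of_forall fun y =>
      integral_mul_const _ (fun θ => gaussPdf (m θ) v y))
  have hGFeq : ∫ y, EEG q m v y * F y = ∫ θ, (∫ y, gaussPdf (m θ) v y * F y) ∂q := by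
    rw [← hGswap3]
    exact integral_congr_ae (Filter.Eventually.of_forall fun y =>
      (integral_mul_const _ (fun θ => gaussPdf (m θ) v y)).symm)
  -- the comparison Gaussian with variance v^2 + V
  set σ : ℝ := Real.sqrt (v ^ 2 + V) with hσdef
  have hσpos : 0 < σ := Real.sqrt_pos.2 (by linarith)
  have hσsq : σ ^ 2 = v ^ 2 + V := Real.sq_sqrt (by linarith)
  set Ls := Real.log (2 * Real.pi * σ ^ 2) with hLs
  have hgpos : ∀ y, 0 < gaussPdf mb σ y := fun y => EEgaussPdf_pos hσpos _ _
  have hgint : Integrable (gaussPdf mb σ) := EEintegrable_gaussPdf hσpos _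
  have hgone : ∫ y, gaussPdf mb σ y = 1 := EEintegral_gaussPdf hσpos _
  have hpt5 : ∀ y, EEG q m v y * F y
      ≤ (EEG q m v y * (-Real.log (gaussPdf mb σ y)) + gaussPdf mb σ y - EEG q m v y)
        - (L / 2) * EEG q m v y := by
    intro y
    have hG := EEG_pos q v hm_meas hv y
    have hg := hgpos y
    have h1 : Real.log (gaussPdf mb σ y / EEG q m v y)
        ≤ gaussPdf mb σ y / EEG q m v y - 1 :=
      Real.log_le_sub_one_of_pos (div_pos hg hG)
    rw [Real.log_div hg.ne' hG.ne'] at h1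
    have h2 := mul_le_mul_of_nonneg_left h1 hG.le
    have h3 : EEG q m v y * (gaussPdf mb σ y / EEG q m v y) = gaussPdf mb σ y := by
      field_simp
    rw [mul_sub, mul_sub, h3, mul_one] at h2
    simp only [hFdef]
    nlinarith [h2]
  have hnlg : ∀ y, -Real.log (gaussPdf mb σ y)
      = Ls / 2 + (y - mb) ^ 2 / (2 * σ ^ 2) := fun y => by
    rw [EElog_gaussPdf hσpos, hLs]; ring
  have hR1int : Integrable (fun y => EEG q m v y * (-Real.log (gaussPdf mb σ y))) := by
    have h := (hGint.const_mul (Ls / 2)).add (hGsqint.const_mul (2 * σ ^ 2)⁻¹)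
    refine h.congr (Filter.Eventually.of_forall fun y => ?_)
    simp only [Pi.add_apply]
    rw [hnlg y]
    field_simp
  have hR1val : ∫ y, EEG q m v y * (-Real.log (gaussPdf mb σ y))
      = Ls / 2 + (v ^ 2 + V) / (2 * σ ^ 2) := by
    have he : (fun y => EEG q m v y * (-Real.log (gaussPdf mb σ y)))
        = fun y => (Ls / 2) * EEG q m v y
          + (2 * σ ^ 2)⁻¹ * (EEG q m v y * (y - mb) ^ 2) := by
      funext y
      rw [hnlg y]
      field_simp
    rw [he, integral_add (hGint.const_mul _) (hGsqint.const_mul _),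
      integral_const_mul, integral_const_mul, hGone, hGsqval, inv_mul_eq_div]
    ring
  have hR5int : Integrable (fun y => (EEG q m v y * (-Real.log (gaussPdf mb σ y))
      + gaussPdf mb σ y - EEG q m v y) - (L / 2) * EEG q m v y) :=
    ((hR1int.add hgint).sub hGint).sub (hGint.const_mul _)
  have hR5val : ∫ y, ((EEG q m v y * (-Real.log (gaussPdf mb σ y))
      + gaussPdf mb σ y - EEG q m v y) - (L / 2) * EEG q m v y)
      = Ls / 2 + 1 / 2 - L / 2 := by
    have hi1 : Integrable (fun y => EEG q m v y * (-Real.log (gaussPdf mb σ y))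
        + gaussPdf mb σ y) := hR1int.add hgint
    have hi2 : Integrable (fun y => EEG q m v y * (-Real.log (gaussPdf mb σ y))
        + gaussPdf mb σ y - EEG q m v y) := hi1.sub hGint
    rw [integral_sub hi2 (hGint.const_mul _),
      integral_sub hi1 hGint,
      integral_add hR1int hgint, integral_const_mul, hGone, hgone, hR1val, hσsq]
    have hne : v ^ 2 + V ≠ 0 := by linarith
    field_simp
    ring
  have hGFle : ∫ y, EEG q m v y * F y ≤ Ls / 2 + 1 / 2 - L / 2 := by
    have h := integral_mono hGFint hR5int hpt5
    rwa [hR5val] at h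
  have hLσ : Ls ≤ L + V / v ^ 2 := by
    have hx : (0:ℝ) < 1 + V / v ^ 2 := by
      have := div_nonneg hV0 hv2.le
      linarith
    rw [hLs, hL, hσsq]
    have h1 : 2 * Real.pi * (v ^ 2 + V) = (2 * Real.pi * v ^ 2) * (1 + V / v ^ 2) := by
      field_simp
    rw [h1, Real.log_mul (by positivity) hx.ne']
    have h2 := Real.log_le_sub_one_of_pos hx
    linarith
  have hKLθ : ∀ θ, (∫ y, gaussPdf (m θ) v y * Real.log (gaussPdf (m θ) v y / EEG q m v y))
      = -(1/2) + ∫ y, gaussPdf (m θ) v y * F y := by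
    intro θ
    have hfe : (fun y => gaussPdf (m θ) v y * Real.log (gaussPdf (m θ) v y / EEG q m v y))
        = fun y => (gaussPdf (m θ) v y * Real.log (gaussPdf (m θ) v y))
          + (gaussPdf (m θ) v y * F y + (L / 2) * gaussPdf (m θ) v y) := by
      funext y
      rw [Real.log_div (EEgaussPdf_pos hv _ _).ne' (EEG_pos q v hm_meas hv y).ne']
      simp only [hFdef]
      rw [hL]
      ring
    have hj1 : Integrable (fun y => gaussPdf (m θ) v y * F y
        + (L / 2) * gaussPdf (m θ) v y) :=
      (hsec3 θ).add ((EEintegrable_gaussPdf hv _).const_mul _)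
    rw [hfe, integral_add (EEintegrable_gaussPdf_mul_log_self hv _) hj1,
      integral_add (hsec3 θ) ((EEintegrable_gaussPdf hv _).const_mul _),
      integral_const_mul, EEintegral_gaussPdf hv, EEintegral_gaussPdf_mul_log_self hv,
      ← hL]
    ring
  have hKLle : (∫ θ, (∫ y : ℝ, gaussPdf (m θ) v y *
        Real.log (gaussPdf (m θ) v y / EEG q m v y)) ∂q) ≤ V / (2 * v ^ 2) := by
    have hKLval : (∫ θ, (∫ y : ℝ, gaussPdf (m θ) v y *
          Real.log (gaussPdf (m θ) v y / EEG q m v y)) ∂q)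
        = -(1/2) + ∫ y, EEG q m v y * F y := by
      rw [integral_congr_ae (Filter.Eventually.of_forall hKLθ),
        integral_add (integrable_const _) hint3, integral_const, ← hGFeq]
      simp [measure_univ]
    have he2 : (L + V / v ^ 2) / 2 - L / 2 = V / (2 * v ^ 2) := by
      field_simp
      ring
    rw [hKLval]
    linarith
  have key : (2 * v ^ 2)⁻¹ * (v ^ 2 + (m θs - mb) ^ 2)
      ≤ 1 / v ^ 2 * (v ^ 2 + (m θs - mb) ^ 2) := by
    refine mul_le_mul_of_nonneg_right ?_ (by positivity)
    rw [one_div]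
    exact inv_anti₀ hv2 (by linarith)
  have eV : V / (2 * v ^ 2) + V / (2 * v ^ 2) = V / v ^ 2 := by
    field_simp
    ring
  rw [hT1]
  linarith
end
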